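/- arXiv:2210.11336 — 8 statements merged into one kernel-verified Lean document; each statement's English description precedes it below -/
import Mathlib

section
/- For any connected graph H on h ≥ 1 vertices and any finite simple graph G, the number of graph homomorphisms from H to G is at most the number of homomorphisms from the star K_{1,h-1} to G; equivalently, hom(H,G) ≤ Σ_{v ∈ V(G)} d_v^{h-1}, where d_v is the degree of v in G. -/
/-!
Fix a vertex `v` of `H` and prove, more generally, that `∑_{f : H → G} d(f v)^M` is at most
`∑_u d_u^(|H| - 1 + M)`, by induction on `|H|`. Delete a vertex `l ≠ v` that keeps `H`
connected (a leaf of a spanning tree) and let `p` be a neighbour of `l`: each homomorphism of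
`H - l` extends in at most `d(g p)` ways, and the two-term AM-GM inequality
`(M + 1) a^M b ≤ M a^(M+1) + b^(M+1)` splits `d(g v)^M d(g p)` into two instances of the
induction hypothesis with exponent `M + 1`. The theorem is the case `M = 0`.
-/

open Finset SimpleGraph
open scoped Classical

theorem add_one_mul_pow_mul_le {R : Type*} [CommSemiring R] [LinearOrder R] [IsStrictOrderedRing R]
    [ExistsAddOfLE R] {a b : R} (ha : 0 ≤ a) (hb : 0 ≤ b) (n : ℕ) :
    (n + 1) * (a ^ n * b) ≤ n * a ^ (n + 1) + b ^ (n + 1) := by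
  induction n with
  | zero => simp
  | succ n ih =>
    have hrearr : a ^ (n + 1) * b + b ^ (n + 1) * a ≤ a ^ (n + 1) * a + b ^ (n + 1) * b := by
      rcases le_total a b with hab | hba
      · exact mul_add_mul_le_mul_add_mul (pow_le_pow_left₀ ha hab _) hab
      · exact mul_add_mul_le_mul_add_mul' (pow_le_pow_left₀ hb hba _) hba
    have := mul_le_mul_of_nonneg_left ih ha
    push_cast
    linear_combination this + hrearr

theorem SimpleGraph.Connected.exists_ne_connected_induce_compl_singleton {V : Type*} [Finite V]
    [Nontrivial V] {H : SimpleGraph V} (hH : H.Connected) (v : V) :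
    ∃ l ≠ v, (H.induce {l}ᶜ).Connected := by
  have := Fintype.ofFinite V
  obtain ⟨T, hTH, hT⟩ := hH.exists_isTree_le
  obtain ⟨l₁, l₂, hne, hl₁, hl₂⟩ := hT.exists_ne_and_degree_eq_one
  have connected_of_leaf {l : V} (hl : T.degree l = 1) : (H.induce {l}ᶜ).Connected :=
    (hT.connected.induce_compl_singleton_of_degree_eq_one hl).mono fun _ _ h => hTH h
  by_cases h₁ : l₁ = v
  · exact ⟨l₂, fun h₂ => hne (h₁.trans h₂.symm), connected_of_leaf hl₂⟩
  · exact ⟨l₁, h₁, connected_of_leaf hl₁⟩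

section Homomorphisms

variable {V W : Type*} [Fintype V] [Fintype W]

noncomputable def homFinset (H : SimpleGraph V) (G : SimpleGraph W) : Finset (V → W) :=
  univ.filter fun f => ∀ a b, H.Adj a b → G.Adj (f a) (f b)

variable {H : SimpleGraph V} {G : SimpleGraph W}

theorem domRestrict_mem_homFinset_induce {f : V → W} (hf : f ∈ homFinset H G) (s : Set V)
    [Fintype s] :
    s.domRestrict f ∈ homFinset (H.induce s) G := by
  simp only [homFinset, mem_filter, mem_univ, true_and] at hf ⊢
  exact fun a b hab => hf a b hab

theorem card_homFinset_domRestrict_eq_le_degree {l p : V} (hp : p ≠ l) (hpl : H.Adj p l)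
    (g : ({l}ᶜ : Set V) → W) :
    #{f ∈ homFinset H G | ({l}ᶜ : Set V).domRestrict f = g} ≤ G.degree (g ⟨p, hp⟩) := by
  rw [← card_neighborFinset_eq_degree]
  refine card_le_card_of_injOn (fun f => f l) (fun f hf => ?_) (fun f₁ hf₁ f₂ hf₂ hl => ?_)
  · simp only [homFinset, coe_filter, mem_filter, mem_univ, true_and, Set.mem_ofPred_eq] at hf
    rw [coe_neighborFinset, mem_neighborSet, ← hf.2]
    exact hf.1 p l hpl
  · simp only [homFinset, coe_filter, mem_filter, mem_univ, true_and, Set.mem_ofPred_eq]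
      at hf₁ hf₂
    funext x
    by_cases hx : x = l
    · exact hx ▸ hl
    · exact congrFun (hf₁.2.trans hf₂.2.symm) ⟨x, hx⟩

theorem sum_homFinset_le_sum_homFinset_induce_mul_degree {l p : V} (hp : p ≠ l)
    (hpl : H.Adj p l) (φ : (({l}ᶜ : Set V) → W) → ℕ) :
    ∑ f ∈ homFinset H G, φ (({l}ᶜ : Set V).domRestrict f) ≤
      ∑ g ∈ homFinset (H.induce {l}ᶜ) G, φ g * G.degree (g ⟨p, hp⟩) := by
  rw [← sum_fiberwise_of_maps_to' (fun f hf => domRestrict_mem_homFinset_induce hf {l}ᶜ) φ]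
  refine sum_le_sum fun g _ => ?_
  rw [sum_const, smul_eq_mul, mul_comm]
  exact Nat.mul_le_mul_left _ (card_homFinset_domRestrict_eq_le_degree hp hpl g)

theorem sum_homFinset_degree_pow_of_subsingleton [Subsingleton V] (v : V) (M : ℕ) :
    ∑ f ∈ homFinset H G, G.degree (f v) ^ M = ∑ u, G.degree u ^ M := by
  have hall : homFinset H G = univ :=
    filter_true_of_mem fun f _ a b hab => (hab.ne (Subsingleton.elim a b)).elim
  have := uniqueOfSubsingleton v
  rw [hall]
  exact Fintype.sum_equiv (Equiv.funUnique V W) _ _ fun f => by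
    rw [Equiv.funUnique_apply, Unique.eq_default v]

theorem sum_homFinset_degree_pow_le (hH : H.Connected) (v : V) (M : ℕ) :
    ∑ f ∈ homFinset H G, G.degree (f v) ^ M ≤
      ∑ u, G.degree u ^ (Fintype.card V - 1 + M) := by
  induction hn : Fintype.card V generalizing V M with
  | zero => exact absurd hn (Fintype.card_pos_iff.mpr hH.nonempty).ne'
  | succ n ih =>
    rcases subsingleton_or_nontrivial V with hV | _
    · obtain rfl : n = 0 := by
        have := Fintype.card_le_one_iff_subsingleton.mpr hV
        omega
      simp [sum_homFinset_degree_pow_of_subsingleton]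
    have := hH.nonempty
    obtain ⟨l, hlv, hconn⟩ := hH.exists_ne_connected_induce_compl_singleton v
    obtain ⟨p, hpl⟩ := hH.preconnected.exists_adj_of_nontrivial l
    have hcard : Fintype.card ({l}ᶜ : Set V) = n := by
      rw [Fintype.card_compl_set, hn, Set.card_singleton, Nat.add_sub_cancel]
    have hn_pos : 1 ≤ n := by
      have := Fintype.one_lt_card (α := V)
      omega
    set v' : ({l}ᶜ : Set V) := ⟨v, hlv.symm⟩
    set p' : ({l}ᶜ : Set V) := ⟨p, hpl.ne.symm⟩
    set S := ∑ u, G.degree u ^ (n - 1 + (M + 1))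
    have key : (M + 1) * ∑ f ∈ homFinset H G, G.degree (f v) ^ M ≤ (M + 1) * S := calc
      (M + 1) * ∑ f ∈ homFinset H G, G.degree (f v) ^ M
        ≤ (M + 1) * ∑ g ∈ homFinset (H.induce {l}ᶜ) G,
            G.degree (g v') ^ M * G.degree (g p') :=
          Nat.mul_le_mul_left _
            (sum_homFinset_le_sum_homFinset_induce_mul_degree hpl.ne.symm hpl.symm
              fun g => G.degree (g v') ^ M)
      _ ≤ ∑ g ∈ homFinset (H.induce {l}ᶜ) G,
            (M * G.degree (g v') ^ (M + 1) + G.degree (g p') ^ (M + 1)) := by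
          rw [mul_sum]
          exact sum_le_sum fun g _ =>
            mod_cast add_one_mul_pow_mul_le (Nat.zero_le _) (Nat.zero_le _) M
      _ ≤ M * S + S := by
          rw [sum_add_distrib, ← mul_sum]
          gcongr
          · exact ih hconn v' (M + 1) hcard
          · exact ih hconn p' (M + 1) hcard
      _ = (M + 1) * S := by ring
    have hexp : n - 1 + (M + 1) = n + 1 - 1 + M := by omega
    exact hexp ▸ Nat.le_of_mul_le_mul_left key M.succ_pos

end Homomorphisms

theorem sidorenko_hom_le_star_general
    {VH VG : Type*} [Fintype VH] [Fintype VG]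
    (H : SimpleGraph VH) (G : SimpleGraph VG)
    (h : ℕ) (hcard : Fintype.card VH = h)
    (hconn : H.Connected) :
    (Finset.univ.filter
      (fun f : VH → VG => ∀ a b, H.Adj a b → G.Adj (f a) (f b))).card
      ≤ ∑ v : VG, (G.degree v) ^ (h - 1) := by
  obtain ⟨v⟩ := hconn.nonempty
  simpa only [pow_zero, sum_const, smul_eq_mul, mul_one, add_zero, hcard, homFinset] using
    sum_homFinset_degree_pow_le (G := G) hconn v 0

/-- Sidorenko's inequality: for a connected graph `H` on `h ≥ 1` vertices and any
finite graph `G`, the number of homomorphisms `H → G` is at most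
`∑ v, d_v ^ (h-1)` (which equals `hom(K_{1,h-1}, G)`). -/
theorem sidorenko_hom_le_star
    {VH VG : Type*} [Fintype VH] [Fintype VG]
    (H : SimpleGraph VH) (G : SimpleGraph VG)
    (h : ℕ) (hh : 1 ≤ h) (hcard : Fintype.card VH = h)
    (hconn : H.Connected) :
    (Finset.univ.filter
      (fun f : VH → VG => ∀ a b, H.Adj a b → G.Adj (f a) (f b))).card
      ≤ ∑ v : VG, (G.degree v) ^ (h - 1) :=
  sidorenko_hom_le_star_general H G h hcard hconn
end

section
/- Let H be a connected rooted graph on h ≥ 1 vertices with root o, G a finite simple graph, Δ ≥ 0, and α = (α_w)_{w ∈ V(H)} a vector of non-negative reals. Then the weighted homomorphism count hom_{Δ,α}(H,G) := Σ_{φ ∈ Hom(H,G)} 1[d_{φ(o)} ≥ Δ] · Π_{w ∈ V(H)} d_{φ(w)}^{α_w} satisfies hom_{Δ,α}(H,G) ≤ Σ_{v ∈ V(G)} d_v^{h-1+|α|} · 1[d_v ≥ Δ], where |α| := Σ_{w ∈ V(H)} α_w. -/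
open Finset SimpleGraph
open scoped Classical

/-!
Fix a parent map `π` of a breadth-first spanning tree of `H` rooted at `o`; forgetting the
non-tree edges can only increase the count. Weighted AM-GM bounds `∏_w d_{φ w}^{α_w}` by a convex
combination of the single powers `d_{φ w}^{|α|}`, so it suffices to bound tree sums carrying one
marked vertex `w` with weight `d_{φ w}^s`. A leaf `u ≠ w` is removed by summing out `φ u`, which
leaves a factor `d_{φ (π u)}`; Young's inequality `a b^s ≤ a^{s+1}/(s+1) + s b^{s+1}/(s+1)` turns it
into one extra unit of exponent at `π u` or at `w`, and induction applies. When `w` is the only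
leaf, the subtree is a path from `w` to `o` and the sum equals `∑_v 1[d_v ≥ Δ] (A^k d^s)(v)` for
the adjacency matrix `A`; since both weights are monotone in the degree, the rearrangement
inequality for the symmetric nonnegative matrices `A^j`, applied `k` times, bounds it by
`∑_v 1[d_v ≥ Δ] d_v^{k+s}`.
-/

theorem Fintype.card_nsmul_sum_eq_sum_sum_update {ι κ M : Type*} [Fintype ι] [Fintype κ]
    [AddCommMonoid M] (u : ι) (F : (ι → κ) → M) :
    Fintype.card κ • ∑ f, F f = ∑ f, ∑ x, F (Function.update f u x) := by
  let e : (ι → κ) × κ ≃ (ι → κ) × κ :=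
    { toFun p := (Function.update p.1 u p.2, p.1 u)
      invFun p := (Function.update p.1 u p.2, p.1 u)
      left_inv _ := by simp
      right_inv _ := by simp }
  rw [← Fintype.sum_prod_type', ← Equiv.sum_comp e.symm, Fintype.sum_prod_type, Finset.sum_comm]
  simp [e, Finset.smul_sum]

theorem Matrix.IsSymm.sum_mul_mul_le_of_monovary {ι : Type*} [Fintype ι] {M : Matrix ι ι ℝ}
    (hM : M.IsSymm) (hM0 : ∀ i j, 0 ≤ M i j) {f g : ι → ℝ} (hfg : Monovary f g) :
    ∑ i, ∑ j, M i j * (f i * g j) ≤ ∑ i, ∑ j, M i j * (f i * g i) := by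
  have swap : ∀ φ : ι → ι → ℝ, ∑ i, ∑ j, M i j * φ j i = ∑ i, ∑ j, M i j * φ i j := by
    intro φ
    rw [Finset.sum_comm]
    simp only [hM.apply]
  have key : ∑ i, ∑ j, M i j * (f i * g j + f j * g i)
      ≤ ∑ i, ∑ j, M i j * (f i * g i + f j * g j) :=
    Finset.sum_le_sum fun i _ ↦ Finset.sum_le_sum fun j _ ↦
      mul_le_mul_of_nonneg_left (hfg.mul_add_mul_le_mul_add_mul i j) (hM0 i j)
  simp only [mul_add, Finset.sum_add_distrib, swap fun j i ↦ f j * g i,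
    swap fun j _ ↦ f j * g j] at key
  linarith

theorem Real.mul_rpow_le_add_rpow_add_one {a b s : ℝ} (ha : 0 ≤ a) (hb : 0 ≤ b) (hs : 0 ≤ s) :
    a * b ^ s ≤ a ^ (s + 1) / (s + 1) + s / (s + 1) * b ^ (s + 1) := by
  have hs1 : 0 < s + 1 := by linarith
  have amgm := Real.geom_mean_le_arith_mean2_weighted (w₁ := 1 / (s + 1)) (w₂ := s / (s + 1))
    (p₁ := a ^ (s + 1)) (p₂ := b ^ (s + 1)) (by positivity) (by positivity) (by positivity)
    (by positivity) (by field_simp; ring)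
  rw [← Real.rpow_mul ha, ← Real.rpow_mul hb, mul_one_div_cancel hs1.ne', Real.rpow_one,
    mul_div_cancel₀ s hs1.ne', one_div_mul_eq_div] at amgm
  linarith

theorem Real.rpow_mul_pow_eq_rpow_add_natCast {x s : ℝ} (hx : 0 ≤ x) (hs : 0 ≤ s) (k : ℕ) :
    x ^ s * x ^ k = x ^ (s + k) := by
  by_cases h : s + k = 0
  · obtain ⟨rfl, hk⟩ : s = 0 ∧ (k : ℝ) = 0 := by constructor <;> linarith [k.cast_nonneg (α := ℝ)]
    simp [Nat.cast_eq_zero.1 hk]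
  · exact (Real.rpow_add_natCast' hx h).symm

theorem Real.prod_rpow_le_sum_div_mul_rpow {ι : Type*} (s : Finset ι) {x α : ι → ℝ}
    (hx : ∀ i ∈ s, 0 ≤ x i) (hα : ∀ i ∈ s, 0 ≤ α i) (hσ : 0 < ∑ i ∈ s, α i) :
    ∏ i ∈ s, x i ^ α i ≤ ∑ i ∈ s, α i / (∑ j ∈ s, α j) * x i ^ (∑ j ∈ s, α j) := by
  set σ := ∑ j ∈ s, α j
  calc ∏ i ∈ s, x i ^ α i = ∏ i ∈ s, (x i ^ σ) ^ (α i / σ) := by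
        refine Finset.prod_congr rfl fun i hi ↦ ?_
        rw [← Real.rpow_mul (hx i hi), mul_div_cancel₀ _ hσ.ne']
    _ ≤ _ := Real.geom_mean_le_arith_mean_weighted s _ _
        (fun i hi ↦ div_nonneg (hα i hi) hσ.le) (by rw [← Finset.sum_div, div_self hσ.ne'])
        (fun i hi ↦ Real.rpow_nonneg (hx i hi) _)

theorem Real.sum_mul_prod_rpow_le_of_forall {κ ι : Type*} [Fintype ι] [Nonempty ι]
    (s : Finset κ) {c : κ → ℝ} {x : κ → ι → ℝ} {α : ι → ℝ} (hc : ∀ k ∈ s, 0 ≤ c k)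
    (hx : ∀ k ∈ s, ∀ i, 0 ≤ x k i) (hα : ∀ i, 0 ≤ α i) {B : ℝ}
    (hB : ∀ i, ∑ k ∈ s, c k * x k i ^ (∑ j, α j) ≤ B) :
    ∑ k ∈ s, c k * ∏ i, x k i ^ α i ≤ B := by
  set σ := ∑ j, α j
  rcases (Finset.sum_nonneg fun i _ ↦ hα i : 0 ≤ σ).eq_or_lt with hσ | hσ
  · have hα0 : ∀ i, α i = 0 := fun i ↦
      (Finset.sum_eq_zero_iff_of_nonneg fun i _ ↦ hα i).1 hσ.symm i (Finset.mem_univ i)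
    have hσ0 : σ = 0 := hσ.symm
    simpa [hα0, hσ0] using hB (Classical.arbitrary ι)
  · calc ∑ k ∈ s, c k * ∏ i, x k i ^ α i
        ≤ ∑ k ∈ s, c k * ∑ i, α i / σ * x k i ^ σ :=
          Finset.sum_le_sum fun k hk ↦ mul_le_mul_of_nonneg_left
            (Real.prod_rpow_le_sum_div_mul_rpow _ (fun i _ ↦ hx k hk i) (fun i _ ↦ hα i) hσ)
            (hc k hk)
      _ = ∑ i, α i / σ * ∑ k ∈ s, c k * x k i ^ σ := by
          simp only [Finset.mul_sum]
          rw [Finset.sum_comm]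
          exact Finset.sum_congr rfl fun _ _ ↦ Finset.sum_congr rfl fun _ _ ↦ by ring
      _ ≤ ∑ i, α i / σ * B := by
          gcongr with i
          · exact div_nonneg (hα i) hσ.le
          · exact hB i
      _ = B := by rw [← Finset.sum_mul, ← Finset.sum_div, div_self hσ.ne', one_mul]

theorem SimpleGraph.Connected.exists_parent {V : Type*} {H : SimpleGraph V} (hconn : H.Connected)
    (o : V) : ∃ π : V → V, ∀ v, v ≠ o → H.Adj (π v) v ∧ H.dist o (π v) < H.dist o v := by
  have (v : V) : ∃ p, v ≠ o → H.Adj p v ∧ H.dist o p < H.dist o v := by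
    obtain ⟨q, hq⟩ := hconn.exists_walk_length_eq_dist v o
    cases q with
    | nil => exact ⟨o, fun h ↦ (h rfl).elim⟩
    | cons hadj q =>
      refine ⟨_, fun _ ↦ ⟨hadj.symm, ?_⟩⟩
      rw [dist_comm, dist_comm (u := o), ← hq, Walk.length_cons]
      exact Nat.lt_succ_of_le (dist_le q)
  choose π hπ using this
  exact ⟨π, hπ⟩

namespace SimpleGraph

open Matrix

variable {W : Type*} [Fintype W] (G : SimpleGraph W)

theorem adjMatrix_pow_apply_nonneg (k : ℕ) (v u : W) : 0 ≤ (G.adjMatrix ℝ ^ k) v u := by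
  rw [adjMatrix_pow_apply_eq_card_walk]
  exact Nat.cast_nonneg _

theorem sum_mul_adjMatrix_pow_mulVec_le (k : ℕ) {F P : ℕ → ℝ} (hF : Monotone F)
    (hP : Monotone P) (hF0 : 0 ≤ F) (hP0 : 0 ≤ P) :
    ∑ v, F (G.degree v) * (G.adjMatrix ℝ ^ k *ᵥ fun u ↦ P (G.degree u)) v
      ≤ ∑ v, F (G.degree v) * P (G.degree v) * (G.degree v : ℝ) ^ k := by
  induction k generalizing F P with
  | zero => simp
  | succ k ih =>
    set M := G.adjMatrix ℝ ^ (k + 1)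
    have expand (a b : W → ℝ) : ∑ v, a v * (M *ᵥ b) v = ∑ v, ∑ u, M v u * (a v * b u) := by
      simp only [Matrix.mulVec, dotProduct, Finset.mul_sum]
      exact Finset.sum_congr rfl fun _ _ ↦ Finset.sum_congr rfl fun _ _ ↦ by ring
    have hFP : Monotone (F * P) := fun a b hab ↦
      mul_le_mul (hF hab) (hP hab) (hP0 a) (hF0 b)
    calc ∑ v, F (G.degree v) * (M *ᵥ fun u ↦ P (G.degree u)) v
        = ∑ v, ∑ u, M v u * (F (G.degree v) * P (G.degree u)) := expand _ _
      _ ≤ ∑ v, ∑ u, M v u * (F (G.degree v) * P (G.degree v)) :=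
        (G.isSymm_adjMatrix.pow (k + 1)).sum_mul_mul_le_of_monovary
          (G.adjMatrix_pow_apply_nonneg (k + 1)) ((hF.monovary hP).comp_right fun v ↦ G.degree v)
      _ = ∑ v, (F * P) (G.degree v) * (M *ᵥ Function.const W 1) v := by
        rw [expand]; simp
      _ = ∑ v, (F * P) (G.degree v) * (G.adjMatrix ℝ ^ k *ᵥ fun u ↦ (G.degree u : ℝ)) v := by
        have hdeg : G.adjMatrix ℝ *ᵥ Function.const W 1 = fun u ↦ (G.degree u : ℝ) := by
          ext u; simp
        simp only [M, pow_succ, ← Matrix.mulVec_mulVec, hdeg]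
      _ ≤ ∑ v, (F * P) (G.degree v) * G.degree v * (G.degree v : ℝ) ^ k :=
        ih hFP Nat.mono_cast (mul_nonneg hF0 hP0) fun _ ↦ Nat.cast_nonneg _
      _ = ∑ v, F (G.degree v) * P (G.degree v) * (G.degree v : ℝ) ^ (k + 1) := by
        simp only [Pi.mul_apply, pow_succ]
        exact Finset.sum_congr rfl fun _ _ ↦ by ring

end SimpleGraph

namespace ParentMap

open Matrix

variable {V W : Type*}

section Leaves

-- The parent `π o` of the root is a junk value, so every condition exempts `o`.
variable (π : V → V) (o : V)

def IsParentClosed (S : Finset V) : Prop := ∀ v ∈ S, v ≠ o → π v ∈ S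

def IsLeaf (S : Finset V) (u : V) : Prop := u ∈ S ∧ u ≠ o ∧ ∀ v ∈ S, v ≠ o → π v ≠ u

variable {π o} {r : V → ℕ} {S : Finset V} {u w : V}

theorem IsLeaf.parent_ne (hr : ∀ v, v ≠ o → r (π v) < r v) (hu : IsLeaf π o S u) : π u ≠ u :=
  fun h ↦ (hr u hu.2.1).ne (congrArg r h)

theorem exists_isLeaf (hr : ∀ v, v ≠ o → r (π v) < r v) (h : ∃ v ∈ S, v ≠ o) :
    ∃ u, IsLeaf π o S u := by
  obtain ⟨v₀, hv₀, hv₀o⟩ := h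
  obtain ⟨u, hu, hmax⟩ := (S.erase o).exists_max_image r ⟨v₀, Finset.mem_erase.2 ⟨hv₀o, hv₀⟩⟩
  obtain ⟨huo, huS⟩ := Finset.mem_erase.1 hu
  refine ⟨u, huS, huo, fun v hv hvo hvu ↦ ?_⟩
  have hle := hmax v (Finset.mem_erase.2 ⟨hvo, hv⟩)
  have hlt := hr v hvo
  rw [hvu] at hlt
  omega

theorem IsParentClosed.erase (hS : IsParentClosed π o S) (hu : IsLeaf π o S u) :
    IsParentClosed π o (S.erase u) := fun v hv hvo ↦
  Finset.mem_erase.2 ⟨hu.2.2 v (Finset.mem_of_mem_erase hv) hvo,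
    hS v (Finset.mem_of_mem_erase hv) hvo⟩

theorem IsLeaf.eq_parent_of_erase (hu : IsLeaf π o (S.erase w) u)
    (hleaf : ∀ u, IsLeaf π o S u → u = w) : u = π w := by
  by_contra hne
  have huS : IsLeaf π o S u := ⟨Finset.mem_of_mem_erase hu.1, hu.2.1, fun v hv hvo ↦ by
    rcases eq_or_ne v w with rfl | hvw
    · exact Ne.symm hne
    · exact hu.2.2 v (Finset.mem_erase.2 ⟨hvw, hv⟩) hvo⟩
  exact Finset.ne_of_mem_erase hu.1 (hleaf u huS)

end Leaves

variable (G : SimpleGraph W) (π : V → V) (o : V)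

def IsTreeHomOn (S : Finset V) (f : V → W) : Prop := ∀ v ∈ S, v ≠ o → G.Adj (f (π v)) (f v)

variable {G π o} {r : V → ℕ} {S : Finset V} {u w : V}

theorem isTreeHomOn_update_iff (hr : ∀ v, v ≠ o → r (π v) < r v) (hu : IsLeaf π o S u)
    (f : V → W) (x : W) :
    IsTreeHomOn G π o S (Function.update f u x) ↔
      IsTreeHomOn G π o (S.erase u) f ∧ G.Adj (f (π u)) x := by
  have hpu := hu.parent_ne hr
  constructor
  · intro h
    refine ⟨fun v hv hvo ↦ ?_, ?_⟩
    · have := h v (Finset.mem_of_mem_erase hv) hvo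
      rwa [Function.update_of_ne (hu.2.2 v (Finset.mem_of_mem_erase hv) hvo),
        Function.update_of_ne (Finset.ne_of_mem_erase hv)] at this
    · simpa [Function.update_of_ne hpu] using h u hu.1 hu.2.1
  · rintro ⟨h, hx⟩ v hv hvo
    rcases eq_or_ne v u with rfl | hvu
    · simpa [Function.update_of_ne hpu] using hx
    · rw [Function.update_of_ne (hu.2.2 v hv hvo), Function.update_of_ne hvu]
      exact h v (Finset.mem_erase.2 ⟨hvu, hv⟩) hvo

variable [Fintype V] [Fintype W]

variable (G π o) in
/-- The sum runs over all maps `V → W`: vertices outside `S` are unconstrained, which is where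
the powers of `Fintype.card W` in the bounds below come from. -/
noncomputable def treeSum (S : Finset V) (g : (V → W) → ℝ) : ℝ :=
  ∑ f ∈ univ.filter (IsTreeHomOn G π o S), g f

theorem card_mul_treeSum_of_isLeaf (hr : ∀ v, v ≠ o → r (π v) < r v) (hu : IsLeaf π o S u)
    (g : (V → W) → ℝ) (hg : ∀ f x, g (Function.update f u x) = g f) (φ : W → ℝ) :
    Fintype.card W * treeSum G π o S (fun f ↦ g f * φ (f u)) =
      treeSum G π o (S.erase u) (fun f ↦ g f * (G.adjMatrix ℝ *ᵥ φ) (f (π u))) := by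
  simp only [treeSum, Finset.sum_filter, ← nsmul_eq_mul,
    Fintype.card_nsmul_sum_eq_sum_sum_update u, isTreeHomOn_update_iff hr hu, hg]
  refine Finset.sum_congr rfl fun f _ ↦ ?_
  split_ifs with hf
  · simp [hf, neighborFinset_eq_filter, Finset.sum_filter, Finset.mul_sum]
  · simp [hf]

theorem card_mul_treeSum_of_forall_eq_root (hS : ∀ v ∈ S, v = o) (μ φ : W → ℝ) :
    Fintype.card W * treeSum G π o S (fun f ↦ μ (f o) * φ (f o)) =
      (Fintype.card W : ℝ) ^ Fintype.card V * ∑ v, μ v * φ v := by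
  have htree : ∀ f, IsTreeHomOn G π o S f := fun f v hv hvo ↦ absurd (hS v hv) hvo
  rw [← nsmul_eq_mul]
  simp [treeSum, htree, Fintype.card_nsmul_sum_eq_sum_sum_update o, nsmul_eq_mul]

theorem card_pow_mul_treeSum_of_forall_isLeaf_eq (hr : ∀ v, v ≠ o → r (π v) < r v)
    (hS : IsParentClosed π o S) (hw : w ∈ S) (hleaf : ∀ u, IsLeaf π o S u → u = w)
    (μ φ : W → ℝ) :
    (Fintype.card W : ℝ) ^ #S * treeSum G π o S (fun f ↦ μ (f o) * φ (f w)) =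
      (Fintype.card W : ℝ) ^ Fintype.card V * ∑ v, μ v * (G.adjMatrix ℝ ^ (#S - 1) *ᵥ φ) v := by
  induction S using Finset.strongInduction generalizing w φ with
  | H S ih =>
  by_cases hroot : ∃ v ∈ S, v ≠ o
  · obtain ⟨u, hu⟩ := exists_isLeaf hr hroot
    obtain rfl := hleaf u hu
    have hpu : π u ∈ S.erase u := Finset.mem_erase.2 ⟨hu.parent_ne hr, hS u hu.1 hu.2.1⟩
    have hcard : #S = #(S.erase u) + 1 := (Finset.card_erase_add_one hu.1).symm
    have hpos : 1 ≤ #(S.erase u) := Finset.card_pos.2 ⟨_, hpu⟩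
    have peel := card_mul_treeSum_of_isLeaf (G := G) hr hu (fun f ↦ μ (f o))
      (fun f x ↦ by simp [Function.update_of_ne hu.2.1.symm]) φ
    have step := ih _ (Finset.erase_ssubset hu.1) (hS.erase hu) hpu
      (fun _ hv ↦ hv.eq_parent_of_erase hleaf) (G.adjMatrix ℝ *ᵥ φ)
    rw [hcard, Nat.add_sub_cancel, pow_succ, mul_assoc, peel, step, Matrix.mulVec_mulVec,
      ← pow_succ, Nat.sub_add_cancel hpos]
  · push Not at hroot
    obtain rfl := hroot w hw
    rw [Finset.eq_singleton_iff_unique_mem.2 ⟨hw, hroot⟩, Finset.card_singleton, pow_one,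
      card_mul_treeSum_of_forall_eq_root (by simp)]
    simp

theorem card_mul_treeSum_rpow_le_of_isLeaf (hr : ∀ v, v ≠ o → r (π v) < r v) {F : ℕ → ℝ}
    (hF0 : 0 ≤ F) (hu : IsLeaf π o S u) (huw : u ≠ w) {s : ℝ} (hs : 0 ≤ s) :
    Fintype.card W * treeSum G π o S (fun f ↦ F (G.degree (f o)) * (G.degree (f w) : ℝ) ^ s) ≤
      treeSum G π o (S.erase u)
          (fun f ↦ F (G.degree (f o)) * (G.degree (f (π u)) : ℝ) ^ (s + 1)) / (s + 1) +
        s / (s + 1) * treeSum G π o (S.erase u)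
          (fun f ↦ F (G.degree (f o)) * (G.degree (f w) : ℝ) ^ (s + 1)) := by
  have peel := card_mul_treeSum_of_isLeaf (G := G) hr hu
    (fun f ↦ F (G.degree (f o)) * (G.degree (f w) : ℝ) ^ s)
    (fun f x ↦ by rw [Function.update_of_ne hu.2.1.symm, Function.update_of_ne huw.symm])
    (fun _ ↦ 1)
  simp only [mul_one, adjMatrix_mulVec_apply, Finset.sum_const, card_neighborFinset_eq_degree,
    nsmul_eq_mul] at peel
  rw [peel, treeSum, treeSum, treeSum, Finset.sum_div, Finset.mul_sum, ← Finset.sum_add_distrib]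
  gcongr with f
  have young := Real.mul_rpow_le_add_rpow_add_one (G.degree (f (π u))).cast_nonneg
    (G.degree (f w)).cast_nonneg hs
  convert mul_le_mul_of_nonneg_left young (hF0 (G.degree (f o))) using 1 <;> ring

theorem card_pow_mul_treeSum_rpow_le (hr : ∀ v, v ≠ o → r (π v) < r v) {F : ℕ → ℝ}
    (hF : Monotone F) (hF0 : 0 ≤ F) (hS : IsParentClosed π o S) (hw : w ∈ S) {s : ℝ}
    (hs : 0 ≤ s) :
    (Fintype.card W : ℝ) ^ #S *
        treeSum G π o S (fun f ↦ F (G.degree (f o)) * (G.degree (f w) : ℝ) ^ s) ≤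
      (Fintype.card W : ℝ) ^ Fintype.card V *
        ∑ v, F (G.degree v) * (G.degree v : ℝ) ^ ((#S : ℝ) - 1 + s) := by
  induction S using Finset.strongInduction generalizing w s with
  | H S ih =>
  by_cases hpeel : ∃ u, IsLeaf π o S u ∧ u ≠ w
  · obtain ⟨u, hu, huw⟩ := hpeel
    have hcard : #S = #(S.erase u) + 1 := (Finset.card_erase_add_one hu.1).symm
    have hexp : ((#(S.erase u) : ℕ) : ℝ) - 1 + (s + 1) = (#S : ℝ) - 1 + s := by
      rw [hcard]; push_cast; ring
    have ih₁ := ih _ (Finset.erase_ssubset hu.1) (hS.erase hu)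
      (Finset.mem_erase.2 ⟨hu.parent_ne hr, hS u hu.1 hu.2.1⟩) (s := s + 1) (by linarith)
    have ih₂ := ih _ (Finset.erase_ssubset hu.1) (hS.erase hu)
      (Finset.mem_erase.2 ⟨huw.symm, hw⟩) (s := s + 1) (by linarith)
    rw [hexp] at ih₁ ih₂
    set B := (Fintype.card W : ℝ) ^ Fintype.card V *
      ∑ v, F (G.degree v) * (G.degree v : ℝ) ^ ((#S : ℝ) - 1 + s)
    have hs1 : 0 < s + 1 := by linarith
    calc _ = (Fintype.card W : ℝ) ^ #(S.erase u) * (Fintype.card W *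
          treeSum G π o S (fun f ↦ F (G.degree (f o)) * (G.degree (f w) : ℝ) ^ s)) := by
          rw [hcard, pow_succ, mul_assoc]
      _ ≤ (Fintype.card W : ℝ) ^ #(S.erase u) *
          (treeSum G π o (S.erase u)
              (fun f ↦ F (G.degree (f o)) * (G.degree (f (π u)) : ℝ) ^ (s + 1)) / (s + 1) +
            s / (s + 1) * treeSum G π o (S.erase u)
              (fun f ↦ F (G.degree (f o)) * (G.degree (f w) : ℝ) ^ (s + 1))) := by
          gcongr
          exact card_mul_treeSum_rpow_le_of_isLeaf hr hF0 hu huw hs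
      _ ≤ B / (s + 1) + s / (s + 1) * B := by
          rw [mul_add, mul_div_assoc', mul_left_comm]
          gcongr
      _ = B := by field_simp; ring
  · push Not at hpeel
    rw [card_pow_mul_treeSum_of_forall_isLeaf_eq (G := G) hr hS hw hpeel (fun v ↦ F (G.degree v))
      (fun v ↦ (G.degree v : ℝ) ^ s)]
    refine mul_le_mul_of_nonneg_left ?_ (by positivity)
    calc _ ≤ ∑ v, F (G.degree v) * (G.degree v : ℝ) ^ s * (G.degree v : ℝ) ^ (#S - 1) :=
          G.sum_mul_adjMatrix_pow_mulVec_le _ hF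
            (fun _ _ hab ↦ Real.rpow_le_rpow (Nat.cast_nonneg _) (Nat.cast_le.2 hab) hs) hF0
            fun _ ↦ Real.rpow_nonneg (Nat.cast_nonneg _) _
      _ = _ := by
          have hk : ((#S - 1 : ℕ) : ℝ) = #S - 1 := by
            rw [Nat.cast_sub (Finset.card_pos.2 ⟨w, hw⟩), Nat.cast_one]
          refine Finset.sum_congr rfl fun v _ ↦ ?_
          rw [mul_assoc, Real.rpow_mul_pow_eq_rpow_add_natCast (Nat.cast_nonneg _) hs, hk,
            add_comm]

theorem treeSum_univ_rpow_le (hr : ∀ v, v ≠ o → r (π v) < r v) {F : ℕ → ℝ}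
    (hF : Monotone F) (hF0 : 0 ≤ F) (w : V) {s : ℝ} (hs : 0 ≤ s) :
    treeSum G π o univ (fun f ↦ F (G.degree (f o)) * (G.degree (f w) : ℝ) ^ s) ≤
      ∑ v, F (G.degree v) * (G.degree v : ℝ) ^ ((Fintype.card V : ℝ) - 1 + s) := by
  rcases isEmpty_or_nonempty W with hW | hW
  · have : IsEmpty (V → W) := ⟨fun f ↦ isEmptyElim (f w)⟩
    simp [treeSum]
  · have := card_pow_mul_treeSum_rpow_le (G := G) hr hF hF0 (fun v _ _ ↦ mem_univ (π v))
      (mem_univ w) hs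
    rw [Finset.card_univ] at this
    exact le_of_mul_le_mul_left this (by positivity)

end ParentMap

open ParentMap in
theorem weighted_truncated_sidorenko_general
    {VH VG : Type*} [Fintype VH] [Fintype VG]
    (H : SimpleGraph VH) (G : SimpleGraph VG) (o : VH)
    (h : ℕ) (hcard : Fintype.card VH = h)
    (hconn : H.Connected) (Δ : ℕ)
    (α : VH → ℝ) (hα : ∀ w, 0 ≤ α w) :
    ∑ f ∈ Finset.univ.filter
        (fun f : VH → VG =>
          (∀ a b, H.Adj a b → G.Adj (f a) (f b)) ∧ Δ ≤ G.degree (f o)),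
      ∏ w : VH, (G.degree (f w) : ℝ) ^ (α w)
      ≤ ∑ v : VG,
          if Δ ≤ G.degree v then
            (G.degree v : ℝ) ^ ((h : ℝ) - 1 + ∑ w : VH, α w)
          else 0 := by
  obtain ⟨π, hπ⟩ := hconn.exists_parent o
  let F : ℕ → ℝ := fun t ↦ if Δ ≤ t then 1 else 0
  have hF : Monotone F := fun a b hab ↦ by
    by_cases ha : Δ ≤ a
    · simp [F, ha, ha.trans hab]
    · by_cases hb : Δ ≤ b <;> simp [F, ha, hb]
  have hF0 : 0 ≤ F := fun t ↦ by by_cases ht : Δ ≤ t <;> simp [F, ht]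
  have : Nonempty VH := ⟨o⟩
  calc _ = ∑ f ∈ univ.filter (fun f : VH → VG =>
          (∀ a b, H.Adj a b → G.Adj (f a) (f b)) ∧ Δ ≤ G.degree (f o)),
        F (G.degree (f o)) * ∏ w, (G.degree (f w) : ℝ) ^ α w :=
        Finset.sum_congr rfl fun f hf ↦ by simp [F, (Finset.mem_filter.1 hf).2.2]
    _ ≤ ∑ f ∈ univ.filter (IsTreeHomOn G π o univ),
        F (G.degree (f o)) * ∏ w, (G.degree (f w) : ℝ) ^ α w := by
        refine Finset.sum_le_sum_of_subset_of_nonneg (fun f hf ↦ ?_) fun f _ _ ↦ ?_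
        · exact Finset.mem_filter.2 ⟨mem_univ f, fun v _ hv ↦
            (Finset.mem_filter.1 hf).2.1 _ _ (hπ v hv).1⟩
        · exact mul_nonneg (hF0 _) (Finset.prod_nonneg fun w _ ↦ by positivity)
    _ ≤ ∑ v, F (G.degree v) * (G.degree v : ℝ) ^ ((h : ℝ) - 1 + ∑ w, α w) := by
        refine Real.sum_mul_prod_rpow_le_of_forall _ (fun _ _ ↦ hF0 _)
          (fun _ _ _ ↦ Nat.cast_nonneg _) hα fun w ↦ ?_
        rw [← hcard]
        exact treeSum_univ_rpow_le (fun v hv ↦ (hπ v hv).2) hF hF0 w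
          (Finset.sum_nonneg fun w _ ↦ hα w)
    _ = _ := Finset.sum_congr rfl fun v _ ↦ by simp [F]

/-- Weighted truncated Sidorenko inequality: for a connected rooted graph `H` on `h`
vertices, nonnegative weights `α`, and any `Δ ≥ 0`,
`hom_{Δ,α}(H,G) ≤ ∑_v d_v^(h-1+|α|) · 1[d_v ≥ Δ]` (real powers, `0^0 = 1`). -/
theorem weighted_truncated_sidorenko
    {VH VG : Type*} [Fintype VH] [Fintype VG]
    (H : SimpleGraph VH) (G : SimpleGraph VG) (o : VH)
    (h : ℕ) (hh : 1 ≤ h) (hcard : Fintype.card VH = h)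
    (hconn : H.Connected) (Δ : ℕ)
    (α : VH → ℝ) (hα : ∀ w, 0 ≤ α w) :
    ∑ f ∈ Finset.univ.filter
        (fun f : VH → VG =>
          (∀ a b, H.Adj a b → G.Adj (f a) (f b)) ∧ Δ ≤ G.degree (f o)),
      ∏ w : VH, (G.degree (f w) : ℝ) ^ (α w)
      ≤ ∑ v : VG,
          if Δ ≤ G.degree v then
            (G.degree v : ℝ) ^ ((h : ℝ) - 1 + ∑ w : VH, α w)
          else 0 :=
  weighted_truncated_sidorenko_general H G o h hcard hconn Δ α hα
end

section
/- Let H be a path with end vertices o and v, let G be a finite graph, and let f, g : V(G) → ℝ≥0 be functions that are weakly increasing functions of vertex degree (i.e., d_x ≤ d_y implies f(x) ≤ f(y) and g(x) ≤ g(y)). Then Σ_{φ ∈ Hom(H,G)} f(φ(o)) g(φ(v)) ≤ Σ_{φ ∈ Hom(H,G)} f(φ(o)) g(φ(o)). -/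
open Finset SimpleGraph
open scoped Classical

/-- Correlation step for paths: if `H` is a path with end vertices `o = 0` and
`v = n-1`, and `f, g : V(G) → ℝ≥0` are weakly increasing functions of the degree, then
`∑_{φ ∈ Hom(H,G)} f(φ(o)) g(φ(v)) ≤ ∑_{φ ∈ Hom(H,G)} f(φ(o)) g(φ(o))`. -/
theorem path_correlation
    {VG : Type*} [Fintype VG] (G : SimpleGraph VG)
    (n : ℕ) (hn : 1 ≤ n)
    (f g : VG → ℝ)
    (hf0 : ∀ x, 0 ≤ f x) (hg0 : ∀ x, 0 ≤ g x)
    (hf : ∀ x y, G.degree x ≤ G.degree y → f x ≤ f y)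
    (hg : ∀ x y, G.degree x ≤ G.degree y → g x ≤ g y) :
    ∑ φ ∈ Finset.univ.filter
        (fun φ : Fin n → VG =>
          ∀ a b, (SimpleGraph.pathGraph n).Adj a b → G.Adj (φ a) (φ b)),
      f (φ ⟨0, by omega⟩) * g (φ ⟨n - 1, by omega⟩)
    ≤ ∑ φ ∈ Finset.univ.filter
        (fun φ : Fin n → VG =>
          ∀ a b, (SimpleGraph.pathGraph n).Adj a b → G.Adj (φ a) (φ b)),
      f (φ ⟨0, by omega⟩) * g (φ ⟨0, by omega⟩) := by
  classical
  set S : Finset (Fin n → VG) := Finset.univ.filter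
      (fun φ : Fin n → VG =>
        ∀ a b, (SimpleGraph.pathGraph n).Adj a b → G.Adj (φ a) (φ b)) with hS
  set a : Fin n := ⟨0, by omega⟩
  set b : Fin n := ⟨n - 1, by omega⟩
  have hreva : Fin.rev a = b := by
    apply Fin.ext; simp [Fin.val_rev, a, b]
  have hrevb : Fin.rev b = a := by
    apply Fin.ext; simp [Fin.val_rev, a, b]; omega
  have hadj : ∀ u v : Fin n, (SimpleGraph.pathGraph n).Adj u v →
      (SimpleGraph.pathGraph n).Adj u.rev v.rev := by
    intro u v h
    rw [SimpleGraph.pathGraph_adj] at h ⊢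
    have hu := u.isLt; have hv := v.isLt
    simp only [Fin.val_rev]
    omega
  have hmem : ∀ φ ∈ S, (φ ∘ Fin.rev) ∈ S := by
    intro φ hφ
    simp only [hS, Finset.mem_filter, Finset.mem_univ, true_and] at hφ ⊢
    intro u v h
    exact hφ _ _ (hadj u v h)
  have key : ∀ F : (Fin n → VG) → ℝ,
      ∑ φ ∈ S, F φ = ∑ φ ∈ S, F (φ ∘ Fin.rev) := by
    intro F
    refine Finset.sum_nbij' (fun φ => φ ∘ Fin.rev) (fun φ => φ ∘ Fin.rev)
      (fun φ hφ => hmem φ hφ) (fun φ hφ => hmem φ hφ) ?_ ?_ ?_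
    · intro φ _; funext i; simp [Function.comp, Fin.rev_rev]
    · intro φ _; funext i; simp [Function.comp, Fin.rev_rev]
    · intro φ _; congr 1; funext i; simp [Function.comp, Fin.rev_rev]
  have term : ∀ x y : VG, f x * g y + f y * g x ≤ f x * g x + f y * g y := by
    intro x y
    rcases le_total (G.degree x) (G.degree y) with h | h
    · have h1 := hf x y h; have h2 := hg x y h; nlinarith
    · have h1 := hf y x h; have h2 := hg y x h; nlinarith
  have hL : ∑ φ ∈ S, f (φ a) * g (φ b) = ∑ φ ∈ S, f (φ b) * g (φ a) := by
    rw [key (fun φ => f (φ a) * g (φ b))]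
    simp [Function.comp, hreva, hrevb]
  have hR : ∑ φ ∈ S, f (φ a) * g (φ a) = ∑ φ ∈ S, f (φ b) * g (φ b) := by
    rw [key (fun φ => f (φ a) * g (φ a))]
    simp [Function.comp, hreva]
  have h2 : (∑ φ ∈ S, f (φ a) * g (φ b)) + ∑ φ ∈ S, f (φ b) * g (φ a)
      ≤ (∑ φ ∈ S, f (φ a) * g (φ a)) + ∑ φ ∈ S, f (φ b) * g (φ b) := by
    rw [← Finset.sum_add_distrib, ← Finset.sum_add_distrib]
    exact Finset.sum_le_sum fun φ _ => term (φ a) (φ b)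
  linarith [h2, hL, hR]
end

section
/- With notation as above, let H be a connected graph on h vertices with rooted spanning tree T rooted at o, let i_T be the number of internal vertices of T, let G be a graph on n vertices, and suppose E[D^{h−1} 1[D ≥ Δ]] ≤ λ where D is the degree of a uniformly random vertex of G. Then E[X̄(v*)] ≤ n^{−1} emb(H,G) ≤ E[X̄(v*)] + i_T λ, where v* is a uniformly random vertex of G and emb(H,G) is the number of embeddings of H into G. -/
open Finset SimpleGraph
open scoped Classical

/-!
An embedding of `H` not counted by `X̄` sends some internal vertex of `T` to a vertex of degree
at least `Δ`. Let `u` be the internal vertex whose image `w` has the largest degree `d`: then the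
embedding is a homomorphism `T → G` with `u ↦ w` mapping every internal vertex to degree at most
`d`. Growing `T` from `u` one edge at a time, every new vertex is a neighbour of the image of the
root or of an internal vertex, so it has at most `d` images, and there are at most `d ^ (h - 1)`
such homomorphisms. A union bound over the internal `u` and the `w` with `d_w ≥ Δ` gives
`emb(H, G) ≤ Σ_v X̄(v) + i_T Σ_{d_w ≥ Δ} d_w ^ (h - 1) ≤ Σ_v X̄(v) + i_T n λ`.
-/

lemma SimpleGraph.one_lt_degree_of_adj_of_adj {V : Type*} {G : SimpleGraph V} {a b c : V}
    [Fintype (G.neighborSet a)] (hb : G.Adj a b) (hc : G.Adj a c) (hbc : b ≠ c) :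
    1 < G.degree a := by
  rw [← card_neighborFinset_eq_degree, one_lt_card]
  exact ⟨b, (mem_neighborFinset G a b).mpr hb, c, (mem_neighborFinset G a c).mpr hc, hbc⟩

section RootedHoms

variable {VH VG : Type*} [Fintype VH] [Fintype VG] (T : SimpleGraph VH) (G : SimpleGraph VG)

noncomputable def rootedHomsDegLE (u : VH) (v : VG) (D : ℕ) : Finset (VH → VG) :=
  {σ | σ u = v ∧ (∀ a b, T.Adj a b → G.Adj (σ a) (σ b)) ∧
    ∀ y, 1 < T.degree y → G.degree (σ y) ≤ D}

variable {T G}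

lemma card_image_piecewise_insert_le {s : Finset VH} {a : VH} (ha : a ∈ s) (b : VH) (w : VG)
    {M : Finset (VH → VG)} {D : ℕ} (hM : ∀ σ ∈ M, G.Adj (σ a) (σ b) ∧ G.degree (σ a) ≤ D) :
    #(M.image ((insert b s).piecewise · fun _ => w)) ≤
      D * #(M.image (s.piecewise · fun _ => w)) := by
  set P := M.image ((insert b s).piecewise · fun _ => w)
  have hP : M.image (s.piecewise · fun _ => w) = P.image (s.piecewise · fun _ => w) := by
    rw [image_image]
    exact image_congr fun σ _ =>
      (piecewise_piecewise_of_subset_left (subset_insert b s) _ _ _).symm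
  have hPa : ∀ τ ∈ P, ∃ σ ∈ M, τ a = σ a ∧ τ b = σ b ∧ ∀ x ∉ insert b s, τ x = w := by
    intro τ hτ
    obtain ⟨σ, hσ, rfl⟩ := mem_image.mp hτ
    exact ⟨σ, hσ, piecewise_eq_of_mem _ _ _ (mem_insert_of_mem ha),
      piecewise_eq_of_mem _ _ _ (mem_insert_self b s), fun x hx => piecewise_eq_of_notMem _ _ _ hx⟩
  rw [hP]
  refine card_le_mul_card_image _ _ fun ρ hρ => ?_
  obtain ⟨τ, hτ, rfl⟩ := mem_image.mp hρ
  obtain ⟨σ, hσ, hτa, -, -⟩ := hPa τ hτ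
  -- a fibre is parametrised by the image of `b`, a neighbour of the image of `a`
  calc #{τ' ∈ P | s.piecewise τ' (fun _ => w) = s.piecewise τ (fun _ => w)}
      ≤ #(G.neighborFinset (σ a)) := by
        refine card_le_card_of_injOn (· b) (fun τ' hτ' => ?_) fun τ₁ hτ₁ τ₂ hτ₂ hb => ?_
        · obtain ⟨hτ'P, hτ'⟩ := mem_filter.mp hτ'
          obtain ⟨σ', hσ', hτ'a, hτ'b, -⟩ := hPa τ' hτ'P
          beta_reduce
          have : τ' a = τ a := by
            simpa only [piecewise_eq_of_mem _ _ _ ha] using congrFun hτ' a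
          rw [mem_coe, mem_neighborFinset, ← hτa, ← this, hτ'a, hτ'b]
          exact (hM σ' hσ').1
        · obtain ⟨hτ₁P, hτ₁⟩ := mem_filter.mp hτ₁
          obtain ⟨hτ₂P, hτ₂⟩ := mem_filter.mp hτ₂
          funext x
          by_cases hxs : x ∈ s
          · simpa only [piecewise_eq_of_mem _ _ _ hxs] using congrFun (hτ₁.trans hτ₂.symm) x
          by_cases hxb : x = b
          · exact hxb ▸ hb
          obtain ⟨-, -, -, -, h₁⟩ := hPa τ₁ hτ₁P
          obtain ⟨-, -, -, -, h₂⟩ := hPa τ₂ hτ₂P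
          have hx : x ∉ insert b s := by simp [hxs, hxb]
          rw [h₁ x hx, h₂ x hx]
    _ ≤ D := (card_neighborFinset_eq_degree G (σ a)).trans_le (hM σ hσ).2

/-- `s.piecewise σ (fun _ => v)` forgets `σ` off `s`, so the image counts restrictions to `s`.
Since every vertex of `s` other than `u` has a neighbour in `s`, a vertex of `s` with a neighbour
outside `s` is the root or internal, so its image has degree at most `D`. -/
lemma exists_card_image_piecewise_le (hT : T.Connected) {u : VH} {v : VG} {D : ℕ}
    (hv : G.degree v ≤ D) (j : ℕ) (hj : j < Fintype.card VH) :
    ∃ s : Finset VH, u ∈ s ∧ #s = j + 1 ∧ (∀ a ∈ s, a ≠ u → ∃ c ∈ s, T.Adj a c) ∧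
      #((rootedHomsDegLE T G u v D).image (s.piecewise · fun _ => v)) ≤ D ^ j := by
  induction j with
  | zero =>
    refine ⟨{u}, mem_singleton_self u, card_singleton u,
      fun a ha hau => absurd (mem_singleton.mp ha) hau, ?_⟩
    have hconst : ∀ σ ∈ rootedHomsDegLE T G u v D, ({u} : Finset VH).piecewise σ (fun _ => v) =
        fun _ => v := by
      intro σ hσ
      rw [piecewise_singleton, (mem_filter.mp hσ).2.1, Function.update_eq_self]
    rw [pow_zero, card_le_one]
    simp only [mem_image]
    rintro _ ⟨σ, hσ, rfl⟩ _ ⟨σ', hσ', rfl⟩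
    rw [hconst σ hσ, hconst σ' hσ']
  | succ j ih =>
    obtain ⟨s, hus, hcard, hparent, hbound⟩ := ih (by omega)
    obtain ⟨b₀, hb₀⟩ : ∃ b₀, b₀ ∉ s := by
      by_contra! hall
      rw [eq_univ_of_forall hall, card_univ] at hcard
      omega
    obtain ⟨⟨⟨a, b⟩, hab⟩, -, ha, hb⟩ :=
      (hT.preconnected u b₀).some.exists_boundary_dart (s : Set VH) hus hb₀
    simp only [mem_coe] at ha hb
    refine ⟨insert b s, mem_insert_of_mem hus, by rw [card_insert_of_notMem hb, hcard], ?_, ?_⟩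
    · intro x hx hxu
      rcases mem_insert.mp hx with rfl | hxs
      · exact ⟨a, mem_insert_of_mem ha, hab.symm⟩
      · obtain ⟨c, hc, hxc⟩ := hparent x hxs hxu
        exact ⟨c, mem_insert_of_mem hc, hxc⟩
    · have hM : ∀ σ ∈ rootedHomsDegLE T G u v D, G.Adj (σ a) (σ b) ∧ G.degree (σ a) ≤ D := by
        intro σ hσ
        obtain ⟨hσu, hσT, hσdeg⟩ := (mem_filter.mp hσ).2
        refine ⟨hσT a b hab, ?_⟩
        by_cases hau : a = u
        · rw [hau, hσu]
          exact hv
        obtain ⟨c, hc, hac⟩ := hparent a ha hau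
        exact hσdeg a (one_lt_degree_of_adj_of_adj hab hac (ne_of_mem_of_not_mem hc hb).symm)
      calc _ ≤ D * #((rootedHomsDegLE T G u v D).image (s.piecewise · fun _ => v)) :=
            card_image_piecewise_insert_le ha b v hM
        _ ≤ D ^ (j + 1) := by
          rw [pow_succ']
          exact Nat.mul_le_mul_left D hbound

theorem card_rootedHomsDegLE_le (hT : T.Connected) (u : VH) (v : VG) {D : ℕ}
    (hv : G.degree v ≤ D) : #(rootedHomsDegLE T G u v D) ≤ D ^ (Fintype.card VH - 1) := by
  have hcard : 0 < Fintype.card VH := Fintype.card_pos_iff.mpr hT.nonempty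
  obtain ⟨s, -, hs, -, hbound⟩ :=
    exists_card_image_piecewise_le hT hv (Fintype.card VH - 1) (by omega)
  rwa [eq_univ_of_card s (by omega), image_congr fun σ _ => piecewise_univ σ _, image_id']
    at hbound

lemma exists_mem_rootedHomsDegLE_of_le_degree {I : Finset VH}
    (hI : ∀ y, 1 < T.degree y → y ∈ I) {σ : VH → VG}
    (hσ : ∀ a b, T.Adj a b → G.Adj (σ a) (σ b)) {Δ : ℕ} (hbad : ∃ y ∈ I, Δ ≤ G.degree (σ y)) :
    ∃ u ∈ I, Δ ≤ G.degree (σ u) ∧ σ ∈ rootedHomsDegLE T G u (σ u) (G.degree (σ u)) := by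
  obtain ⟨y, hyI, hy⟩ := hbad
  obtain ⟨u, huI, hmax⟩ := I.exists_max_image (fun y => G.degree (σ y)) ⟨y, hyI⟩
  exact ⟨u, huI, hy.trans (hmax y hyI),
    mem_filter.mpr ⟨mem_univ _, rfl, hσ, fun z hz => hmax z (hI z hz)⟩⟩

theorem card_homs_exists_le_degree_le (hT : T.Connected) {I : Finset VH}
    (hI : ∀ y, 1 < T.degree y → y ∈ I) (Δ : ℕ) :
    #{σ : VH → VG | (∀ a b, T.Adj a b → G.Adj (σ a) (σ b)) ∧ ∃ y ∈ I, Δ ≤ G.degree (σ y)} ≤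
      #I * ∑ w with Δ ≤ G.degree w, G.degree w ^ (Fintype.card VH - 1) := by
  calc _ ≤ #((I ×ˢ ({w | Δ ≤ G.degree w} : Finset VG)).biUnion
          fun p => rootedHomsDegLE T G p.1 p.2 (G.degree p.2)) := by
        refine card_le_card fun σ hσ => ?_
        obtain ⟨hσT, hbad⟩ := (mem_filter.mp hσ).2
        obtain ⟨u, huI, hu, hσu⟩ := exists_mem_rootedHomsDegLE_of_le_degree hI hσT hbad
        exact mem_biUnion.mpr
          ⟨(u, σ u), mem_product.mpr ⟨huI, mem_filter.mpr ⟨mem_univ _, hu⟩⟩, hσu⟩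
    _ ≤ ∑ p ∈ I ×ˢ ({w | Δ ≤ G.degree w} : Finset VG), G.degree p.2 ^ (Fintype.card VH - 1) :=
        card_biUnion_le.trans (sum_le_sum fun p _ => card_rootedHomsDegLE_le hT p.1 p.2 le_rfl)
    _ = _ := by rw [sum_product]; exact sum_const_nat fun _ _ => rfl

end RootedHoms

theorem truncated_estimator_sandwich_general
    {VH VG : Type*} [Fintype VH] [Fintype VG]
    (H : SimpleGraph VH) (G : SimpleGraph VG) (o : VH)
    (h n : ℕ) (hcard : Fintype.card VH = h)
    (T : SimpleGraph VH) (hTle : T ≤ H) (hTtree : T.IsTree)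
    (Δ : ℕ) (lam : ℝ)
    (hexp : (∑ v : VG, if Δ ≤ G.degree v then (G.degree v : ℝ) ^ (h - 1) else 0) / n
              ≤ lam)
    -- `X̄(v)`: truncated embedding count rooted at `v`
    (Xbar : VG → ℕ)
    (hXbar : ∀ v : VG, Xbar v =
      (Finset.univ.filter
        (fun σ : VH → VG =>
          (∀ a b, H.Adj a b → G.Adj (σ a) (σ b)) ∧ Function.Injective σ ∧
          σ o = v ∧
          ∀ u : VH, (1 < T.degree u ∨ u = o) → G.degree (σ u) < Δ)).card)
    -- `i_T`: number of internal vertices of `T`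
    (iT : ℕ)
    (hiT : iT = (Finset.univ.filter (fun u : VH => 1 < T.degree u ∨ u = o)).card)
    -- `emb(H,G)`: number of embeddings of `H` into `G`
    (emb : ℕ)
    (hemb : emb = (Finset.univ.filter
      (fun σ : VH → VG =>
        (∀ a b, H.Adj a b → G.Adj (σ a) (σ b)) ∧ Function.Injective σ)).card) :
    (∑ v : VG, (Xbar v : ℝ)) / n ≤ (emb : ℝ) / n ∧
    (emb : ℝ) / n ≤ (∑ v : VG, (Xbar v : ℝ)) / n + iT * lam := by
  subst hcard hiT hemb
  set I : Finset VH := {u | 1 < T.degree u ∨ u = o}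
  set B : Finset (VH → VG) :=
    {σ | (∀ a b, H.Adj a b → G.Adj (σ a) (σ b)) ∧ Function.Injective σ}
  set A := {σ ∈ B | ∀ u ∈ I, G.degree (σ u) < Δ}
  set K := ∑ w with Δ ≤ G.degree w, G.degree w ^ (Fintype.card VH - 1)
  have hXbar_sum : ∑ v, (Xbar v : ℝ) = #A := by
    rw [← Nat.cast_sum, card_eq_sum_card_fiberwise (f := (· o)) (t := univ) fun _ _ => mem_univ _]
    refine congrArg _ (sum_congr rfl fun v _ => ?_)
    rw [hXbar v, filter_filter]
    congr 1
    ext σ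
    simp only [B, I, mem_filter, mem_univ, true_and]
    tauto
  have hB : #B ≤ #A + #I * K := by
    rw [← card_filter_add_card_filter_not (fun σ => ∀ u ∈ I, G.degree (σ u) < Δ)]
    refine Nat.add_le_add_left ((card_le_card fun σ hσ => ?_).trans
      (card_homs_exists_le_degree_le hTtree.connected (I := I)
        (fun y hy => mem_filter.mpr ⟨mem_univ y, .inl hy⟩) Δ)) _
    simp only [B, mem_filter, mem_univ, true_and, not_forall, not_lt] at hσ ⊢
    exact ⟨fun a b hab => hσ.1.1 a b (hTle hab), by simpa only [exists_prop] using hσ.2⟩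
  have hK : (K : ℝ) / n ≤ lam := by
    simpa only [K, sum_filter, Nat.cast_sum, Nat.cast_ite, Nat.cast_pow, Nat.cast_zero] using hexp
  have hn : (0 : ℝ) ≤ n := n.cast_nonneg
  rw [hXbar_sum]
  refine ⟨div_le_div_of_nonneg_right (by exact_mod_cast card_le_card (filter_subset _ B)) hn, ?_⟩
  calc (#B : ℝ) / n ≤ (#A + #I * K) / n := div_le_div_of_nonneg_right (by exact_mod_cast hB) hn
    _ = #A / n + #I * (K / n) := by ring
    _ ≤ #A / n + #I * lam := by gcongr

/-- Sandwich bound for the truncated estimator: with `T` a spanning tree of `H`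
rooted at `o`, `i_T` the number of internal vertices of `T`, and
`E[D^(h-1) 1[D ≥ Δ]] ≤ λ` for the degree `D` of a uniform random vertex of `G`,
we have `E[X̄(v*)] ≤ emb(H,G)/n ≤ E[X̄(v*)] + i_T λ`. -/
theorem truncated_estimator_sandwich
    {VH VG : Type*} [Fintype VH] [Fintype VG]
    (H : SimpleGraph VH) (G : SimpleGraph VG) (o : VH)
    (h n : ℕ) (hcard : Fintype.card VH = h) (hn : Fintype.card VG = n)
    (hn1 : 1 ≤ n) (hconn : H.Connected)
    (T : SimpleGraph VH) (hTle : T ≤ H) (hTtree : T.IsTree)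
    (Δ : ℕ) (hΔ : 0 < Δ) (lam : ℝ)
    (hexp : (∑ v : VG, if Δ ≤ G.degree v then (G.degree v : ℝ) ^ (h - 1) else 0) / n
              ≤ lam)
    -- `X̄(v)`: truncated embedding count rooted at `v`
    (Xbar : VG → ℕ)
    (hXbar : ∀ v : VG, Xbar v =
      (Finset.univ.filter
        (fun σ : VH → VG =>
          (∀ a b, H.Adj a b → G.Adj (σ a) (σ b)) ∧ Function.Injective σ ∧
          σ o = v ∧
          ∀ u : VH, (1 < T.degree u ∨ u = o) → G.degree (σ u) < Δ)).card)
    -- `i_T`: number of internal vertices of `T`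
    (iT : ℕ)
    (hiT : iT = (Finset.univ.filter (fun u : VH => 1 < T.degree u ∨ u = o)).card)
    -- `emb(H,G)`: number of embeddings of `H` into `G`
    (emb : ℕ)
    (hemb : emb = (Finset.univ.filter
      (fun σ : VH → VG =>
        (∀ a b, H.Adj a b → G.Adj (σ a) (σ b)) ∧ Function.Injective σ)).card) :
    (∑ v : VG, (Xbar v : ℝ)) / n ≤ (emb : ℝ) / n ∧
    (emb : ℝ) / n ≤ (∑ v : VG, (Xbar v : ℝ)) / n + iT * lam :=
  truncated_estimator_sandwich_general H G o h n hcard T hTle hTtree Δ lam hexp Xbar hXbar iT hiT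
    emb hemb
end

section
/- Let H be a connected graph on h ≥ 1 vertices with rooted spanning tree T (root o), let G be a graph on n ≥ 1 vertices, let D be the degree of a uniformly random vertex in G, and suppose a positive integer Δ and λ ≥ 0 satisfy E[D^{h−1} 1[D ≥ Δ]] ≤ λ. Let v*_1, …, v*_N be i.i.d. uniform vertices of G, let X̂_N := N^{−1} Σ_i X̄(v*_i), and let s > 0, p ∈ (0,1]. If N ≥ (Δ−1)^{2(h−1)} ln(2/p) / (2 s²), then with probability at least 1 − p we have X̂_N − s ≤ n^{−1} emb(H,G) ≤ X̂_N + s + i_T λ. -/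
/-!
Every embedding `σ : H → G` is a homomorphism of the spanning tree `T`. Rooting `T` at a vertex
`r`, such a homomorphism is determined by `σ r` and, for every other vertex `x`, by the position
of `σ x` among the neighbours of `σ (parent x)`; parents are internal vertices, so when every
internal vertex is sent to a vertex of degree at most `B` there are at most `B ^ (h - 1)` of
them. Hence `X̄(v) ≤ (Δ - 1) ^ (h - 1)`, and the embeddings missed by `∑ v, X̄(v)` (those sending
some internal vertex to a vertex of degree `≥ Δ`) are counted by rooting `T` at the internal
vertex of largest image degree `d ≥ Δ`, which gives at most `i_T ∑_{deg w ≥ Δ} deg(w) ^ (h - 1)`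
of them. The samples `X̄(v*_i)` are i.i.d. and take values in `[0, (Δ - 1) ^ (h - 1)]`, so
Hoeffding's inequality bounds the probability that their average is farther than `s` from its
mean `n⁻¹ ∑ v, X̄(v)` by `p`.
-/

open Finset SimpleGraph MeasureTheory ProbabilityTheory
open scoped Classical

section UniformOn

variable {V : Type*} [Fintype V] [MeasurableSpace V] [MeasurableSingletonClass V]

theorem uniformOn_univ_real_finset (s : Finset V) :
    (uniformOn (Set.univ : Set V)).real s = #s / Fintype.card V := by
  simp [measureReal_def, uniformOn_univ, Measure.count_apply_finset, ENNReal.toReal_div]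

theorem integral_uniformOn_univ (f : V → ℝ) :
    ∫ x, f x ∂uniformOn (Set.univ : Set V) = (∑ x, f x) / Fintype.card V := by
  rw [integral_fintype (.of_finite), sum_div]
  refine sum_congr rfl fun x _ => ?_
  rw [← coe_singleton, uniformOn_univ_real_finset]
  simp [div_eq_inv_mul]

end UniformOn

section Sampling

variable {V : Type*} [Fintype V] [Nonempty V]

theorem card_sum_sub_mean_ge_le (Y : V → ℝ) {a b : ℝ} (hY : ∀ v, Y v ∈ Set.Icc a b) (N : ℕ)
    {ε : ℝ} (hε : 0 ≤ ε) :
    (#{ω : Fin N → V | ε ≤ ∑ i, (Y (ω i) - (∑ v, Y v) / Fintype.card V)} : ℝ) ≤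
      Real.exp (-2 * ε ^ 2 / (N * (b - a) ^ 2)) * Fintype.card V ^ N := by
  let _ : MeasurableSpace V := ⊤
  let μ : Measure V := uniformOn Set.univ
  have hmean : μ[Y] = (∑ v, Y v) / Fintype.card V := integral_uniformOn_univ Y
  have hsubG : HasSubgaussianMGF (fun v => Y v - μ[Y]) ((‖b - a‖₊ / 2) ^ 2) μ :=
    hasSubgaussianMGF_of_mem_Icc (by fun_prop) (ae_of_all _ hY)
  have hindep : iIndepFun (fun (i : Fin N) (ω : Fin N → V) => Y (ω i) - μ[Y])
      (Measure.pi fun _ => μ) :=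
    iIndepFun_pi (X := fun _ v => Y v - μ[Y]) fun _ => by fun_prop
  have hsubG_pi : ∀ i ∈ (univ : Finset (Fin N)),
      HasSubgaussianMGF (fun ω : Fin N → V => Y (ω i) - μ[Y]) ((‖b - a‖₊ / 2) ^ 2)
        (Measure.pi fun _ => μ) := fun i _ =>
    HasSubgaussianMGF.of_map (Y := Function.eval i) (measurable_pi_apply i).aemeasurable
      (by rwa [(measurePreserving_eval (fun _ => μ) i).map_eq])
  have hoeffding := HasSubgaussianMGF.measure_sum_ge_le_of_iIndepFun hindep hsubG_pi hε
  rw [← uniformOn_pi, Set.pi_univ, hmean, ← coe_filter_univ, uniformOn_univ_real_finset]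
    at hoeffding
  have hexponent : -ε ^ 2 / (2 * ((∑ _i : Fin N, (‖b - a‖₊ / 2) ^ 2 : NNReal) : ℝ)) =
      -2 * ε ^ 2 / (N * (b - a) ^ 2) := by
    push_cast
    rw [Real.norm_eq_abs, div_pow, sq_abs, sum_const, card_univ, Fintype.card_fin,
      nsmul_eq_mul, show 2 * (N * ((b - a) ^ 2 / 2 ^ 2)) = N * (b - a) ^ 2 / (2 : ℝ) by ring,
      div_div_eq_mul_div]
    ring
  rwa [hexponent, Fintype.card_fun, Fintype.card_fin, Nat.cast_pow,
    div_le_iff₀ (by positivity)] at hoeffding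

theorem card_abs_sum_sub_mean_ge_le (Y : V → ℝ) {a b : ℝ} (hY : ∀ v, Y v ∈ Set.Icc a b)
    (N : ℕ) {ε : ℝ} (hε : 0 ≤ ε) :
    (#{ω : Fin N → V | ε ≤ |∑ i, (Y (ω i) - (∑ v, Y v) / Fintype.card V)|} : ℝ) ≤
      2 * Real.exp (-2 * ε ^ 2 / (N * (b - a) ^ 2)) * Fintype.card V ^ N := by
  have hupper := card_sum_sub_mean_ge_le Y hY N hε
  have hlower := card_sum_sub_mean_ge_le (fun v => -Y v)
    (fun v => ⟨neg_le_neg (hY v).2, neg_le_neg (hY v).1⟩) N hε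
  have hsum_neg (ω : Fin N → V) : ∑ i, (-Y (ω i) - (∑ v, -Y v) / Fintype.card V) =
      -∑ i, (Y (ω i) - (∑ v, Y v) / Fintype.card V) := by
    rw [← sum_neg_distrib]
    refine sum_congr rfl fun i _ => ?_
    rw [sum_neg_distrib]
    ring
  simp only [hsum_neg, show -a - -b = b - a by ring] at hlower
  calc (#{ω : Fin N → V | ε ≤ |∑ i, (Y (ω i) - (∑ v, Y v) / Fintype.card V)|} : ℝ)
      ≤ #{ω : Fin N → V | ε ≤ ∑ i, (Y (ω i) - (∑ v, Y v) / Fintype.card V)} +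
        #{ω : Fin N → V | ε ≤ -∑ i, (Y (ω i) - (∑ v, Y v) / Fintype.card V)} := by
        norm_cast
        refine (card_le_card fun ω => ?_).trans (card_union_le _ _)
        simp only [mem_filter, mem_univ, true_and, mem_union]
        exact le_abs.1
    _ ≤ _ := by linarith

theorem one_sub_mul_le_card_abs_sum_div_sub_mean_le (Y : V → ℝ) {b : ℝ}
    (hY : ∀ v, Y v ∈ Set.Icc 0 b) {s p : ℝ} (hs : 0 < s) (hp : 0 < p) {N : ℕ}
    (hN : b ^ 2 * Real.log (2 / p) / (2 * s ^ 2) ≤ N) :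
    (1 - p) * Fintype.card V ^ N ≤
      #{ω : Fin N → V | |(∑ i, Y (ω i)) / N - (∑ v, Y v) / Fintype.card V| ≤ s} := by
  set m := (∑ v, Y v) / Fintype.card V
  have hcard : (#{ω : Fin N → V | |(∑ i, Y (ω i)) / N - m| ≤ s} : ℝ) +
      #{ω : Fin N → V | ¬|(∑ i, Y (ω i)) / N - m| ≤ s} = Fintype.card V ^ N := by
    norm_cast
    rw [card_filter_add_card_filter_not, card_univ, Fintype.card_fun, Fintype.card_fin]
  obtain hb | hb := ((hY (Classical.arbitrary V)).1.trans (hY _).2).eq_or_lt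
  · have hY0 (v : V) : Y v = 0 := le_antisymm (hb ▸ (hY v).2) (hY v).1
    have hbad : #{ω : Fin N → V | ¬|(∑ i, Y (ω i)) / N - m| ≤ s} = 0 := by
      simp [m, hY0, hs.le]
    rw [hbad] at hcard
    nlinarith [pow_nonneg (Nat.cast_nonneg (α := ℝ) (Fintype.card V)) N]
  have hbad : #{ω : Fin N → V | ¬|(∑ i, Y (ω i)) / N - m| ≤ s} ≤
      #{ω : Fin N → V | N * s ≤ |∑ i, (Y (ω i) - m)|} := by
    refine card_le_card fun ω => ?_
    simp only [mem_filter, mem_univ, true_and, not_le, sum_sub_distrib, sum_const, card_univ,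
      Fintype.card_fin, nsmul_eq_mul]
    intro h
    rcases N.eq_zero_or_pos with rfl | hN0
    · simp
    calc (N : ℝ) * s ≤ N * |(∑ i, Y (ω i)) / N - m| := by gcongr
      _ = |N * ((∑ i, Y (ω i)) / N - m)| := by rw [abs_mul, Nat.abs_cast]
      _ = _ := by field_simp
  have htail := card_abs_sum_sub_mean_ge_le Y hY N (ε := N * s) (by positivity)
  have hexponent : -2 * (N * s) ^ 2 / (N * (b - 0) ^ 2) ≤ -Real.log (2 / p) := by
    rw [div_le_iff₀ (by positivity)] at hN
    rcases N.eq_zero_or_pos with rfl | hN0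
    · simp only [CharP.cast_eq_zero, zero_mul] at hN ⊢
      nlinarith [pow_pos hb 2]
    · rw [div_le_iff₀ (by positivity)]
      nlinarith
  have hexp : Real.exp (-2 * (N * s) ^ 2 / (N * (b - 0) ^ 2)) ≤ p / 2 :=
    (Real.exp_le_exp.2 hexponent).trans_eq
      (by rw [Real.exp_neg, Real.exp_log (by positivity), inv_div])
  have : (#{ω : Fin N → V | ¬|(∑ i, Y (ω i)) / N - m| ≤ s} : ℝ) ≤ p * Fintype.card V ^ N :=
    calc _ ≤ (#{ω : Fin N → V | N * s ≤ |∑ i, (Y (ω i) - m)|} : ℝ) := by exact_mod_cast hbad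
      _ ≤ _ := htail
      _ ≤ 2 * (p / 2) * Fintype.card V ^ N := by gcongr
      _ = _ := by ring
  linarith

end Sampling

theorem SimpleGraph.Connected.exists_adj_dist_add_one {V : Type*} {T : SimpleGraph V}
    (hT : T.Connected) (r : V) {x : V} (hx : x ≠ r) :
    ∃ p, T.Adj p x ∧ T.dist r p + 1 = T.dist r x := by
  obtain ⟨w, hw⟩ := hT.exists_walk_length_eq_dist x r
  cases w with
  | nil => exact absurd rfl hx
  | @cons _ p _ hxp q =>
    refine ⟨p, hxp.symm, ?_⟩
    have hq : T.dist r p ≤ q.length := dist_comm (G := T) ▸ dist_le q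
    have hle : T.dist r x ≤ T.dist r p + 1 :=
      hT.dist_triangle.trans (by rw [dist_eq_one_iff_adj.2 hxp.symm])
    rw [Walk.length_cons, dist_comm] at hw
    omega

namespace SimpleGraph

variable {VH VG : Type*} [Fintype VH] [Fintype VG]

/-- The maps of `A` counted by `X̄(v)` when `S` is the set of internal vertices of `T`. -/
noncomputable def truncatedFiber (G : SimpleGraph VG) (A : Finset (VH → VG)) (S : Finset VH)
    (o : VH) (Δ : ℕ) (v : VG) : Finset (VH → VG) :=
  {σ ∈ A | σ o = v ∧ ∀ u ∈ S, G.degree (σ u) < Δ}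

namespace Connected

variable {T : SimpleGraph VH} (G : SimpleGraph VG) {S : Finset VH} {A : Finset (VH → VG)}

theorem card_rooted_homs_le_pow (hT : T.Connected) (hS : ∀ u, 1 < T.degree u → u ∈ S)
    {r : VH} (hr : r ∈ S) (w : VG) (B : ℕ) :
    #{σ : VH → VG | (∀ a b, T.Adj a b → G.Adj (σ a) (σ b)) ∧ σ r = w ∧
        ∀ u ∈ S, G.degree (σ u) ≤ B} ≤ B ^ (Fintype.card VH - 1) := by
  choose! par hpar_adj hpar_dist using fun x (hx : x ≠ r) => hT.exists_adj_dist_add_one r hx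
  -- the parent of `x` is adjacent to `x` and to its own parent, which is not `x`
  have hpar_mem (x : VH) (hx : x ≠ r) : par x ∈ S := by
    by_cases hpr : par x = r
    · exact hpr ▸ hr
    refine hS _ (one_lt_card.2 ⟨x, ?_, par (par x), ?_, fun h => ?_⟩)
    · simpa using hpar_adj x hx
    · simpa using (hpar_adj _ hpr).symm
    · have h₁ := hpar_dist x hx
      have h₂ := hpar_dist _ hpr
      rw [← h] at h₂
      omega
  let enc (σ : VH → VG) (x : {x // x ≠ r}) : ℕ :=
    (G.neighborFinset (σ (par x))).toList.idxOf (σ x)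
  have hcard : #(Fintype.piFinset fun _ : {x // x ≠ r} => range B) =
      B ^ (Fintype.card VH - 1) := by
    simp
  rw [← hcard]
  refine card_le_card_of_injOn enc (fun σ hσ => ?_) (fun σ₁ hσ₁ σ₂ hσ₂ henc => ?_)
  · obtain ⟨hhom, -, hdeg⟩ := (mem_filter.1 hσ).2
    simp only [Fintype.coe_piFinset, Set.mem_pi, Set.mem_univ, coe_range, Set.mem_Iio,
      forall_const]
    rintro ⟨x, hx⟩
    calc enc σ ⟨x, hx⟩ < (G.neighborFinset (σ (par x))).toList.length :=
          List.idxOf_lt_length_of_mem (by simpa using hhom _ _ (hpar_adj x hx))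
      _ ≤ B := by simpa using hdeg _ (hpar_mem x hx)
  · obtain ⟨hhom₁, hr₁, -⟩ := (mem_filter.1 hσ₁).2
    obtain ⟨-, hr₂, -⟩ := (mem_filter.1 hσ₂).2
    funext x
    induction hd : T.dist r x using Nat.strong_induction_on generalizing x with
    | _ d ih =>
      by_cases hx : x = r
      · rw [hx, hr₁, hr₂]
      have hpx : σ₁ (par x) = σ₂ (par x) := ih _ (by have := hpar_dist x hx; omega) _ rfl
      have hidx := congrFun henc ⟨x, hx⟩
      simp only [enc] at hidx
      rw [hpx] at hidx
      refine (List.idxOf_inj ?_).1 hidx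
      simpa [← hpx] using hhom₁ _ _ (hpar_adj x hx)

theorem card_truncatedFiber_le_pow (hT : T.Connected) (hS : ∀ u, 1 < T.degree u → u ∈ S)
    (hA : ∀ σ ∈ A, ∀ a b, T.Adj a b → G.Adj (σ a) (σ b)) {o : VH} (ho : o ∈ S) (Δ : ℕ) (v : VG) :
    #(G.truncatedFiber A S o Δ v) ≤ (Δ - 1) ^ (Fintype.card VH - 1) := by
  refine (card_le_card fun σ hσ => ?_).trans (hT.card_rooted_homs_le_pow G hS ho v (Δ - 1))
  obtain ⟨hσA, rfl, hdeg⟩ := mem_filter.1 hσ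
  exact mem_filter.2 ⟨mem_univ _, hA σ hσA, rfl, fun u hu => Nat.le_sub_one_of_lt (hdeg u hu)⟩

theorem card_filter_exists_degree_ge_le (hT : T.Connected) (hS : ∀ u, 1 < T.degree u → u ∈ S)
    (hA : ∀ σ ∈ A, ∀ a b, T.Adj a b → G.Adj (σ a) (σ b)) (Δ : ℕ) :
    #{σ ∈ A | ∃ u ∈ S, Δ ≤ G.degree (σ u)} ≤
      #S * ∑ w with Δ ≤ G.degree w, G.degree w ^ (Fintype.card VH - 1) := by
  let rootedAt (u : VH) (w : VG) : Finset (VH → VG) :=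
    {σ | (∀ a b, T.Adj a b → G.Adj (σ a) (σ b)) ∧ σ u = w ∧
      ∀ u' ∈ S, G.degree (σ u') ≤ G.degree w}
  have hsub : {σ ∈ A | ∃ u ∈ S, Δ ≤ G.degree (σ u)} ⊆
      S.biUnion fun u => ({w | Δ ≤ G.degree w} : Finset VG).biUnion (rootedAt u) := by
    intro σ hσ
    obtain ⟨hσA, u₀, hu₀, hΔ⟩ := mem_filter.1 hσ
    obtain ⟨u, hu, hmax⟩ := exists_max_image S (fun u => G.degree (σ u)) ⟨u₀, hu₀⟩
    simp only [mem_biUnion, mem_filter, mem_univ, true_and, rootedAt]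
    exact ⟨u, hu, σ u, hΔ.trans (hmax u₀ hu₀), hA σ hσA, rfl, hmax⟩
  calc _ ≤ _ := card_le_card hsub
    _ ≤ ∑ u ∈ S, ∑ w with Δ ≤ G.degree w, #(rootedAt u w) :=
        card_biUnion_le.trans (sum_le_sum fun u _ => card_biUnion_le)
    _ ≤ ∑ u ∈ S, ∑ w with Δ ≤ G.degree w, G.degree w ^ (Fintype.card VH - 1) :=
        sum_le_sum fun u hu => sum_le_sum fun w _ => hT.card_rooted_homs_le_pow G hS hu w _
    _ = _ := by rw [sum_const, smul_eq_mul]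

theorem truncated_sidorenko (hT : T.Connected) (hS : ∀ u, 1 < T.degree u → u ∈ S)
    (hA : ∀ σ ∈ A, ∀ a b, T.Adj a b → G.Adj (σ a) (σ b)) (o : VH) (Δ : ℕ) {lam : ℝ}
    (hlam : (∑ w, if Δ ≤ G.degree w then (G.degree w : ℝ) ^ (Fintype.card VH - 1) else 0) /
      Fintype.card VG ≤ lam) :
    (∑ v, (#(G.truncatedFiber A S o Δ v) : ℝ)) / Fintype.card VG ≤ #A / Fintype.card VG ∧
      (#A : ℝ) / Fintype.card VG ≤
        (∑ v, (#(G.truncatedFiber A S o Δ v) : ℝ)) / Fintype.card VG + #S * lam := by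
  have hfiber : ∑ v, #(G.truncatedFiber A S o Δ v) =
      #{σ ∈ A | ∀ u ∈ S, G.degree (σ u) < Δ} := by
    rw [card_eq_sum_card_fiberwise (f := fun σ => σ o) (t := univ) fun _ _ => mem_univ _]
    simp only [truncatedFiber, filter_filter, and_comm]
  have hsplit := card_filter_add_card_filter_not (s := A) fun σ => ∀ u ∈ S, G.degree (σ u) < Δ
  simp only [not_forall, not_lt, exists_prop] at hsplit
  have hbad := hT.card_filter_exists_degree_ge_le G hS hA Δ
  set E := ∑ w with Δ ≤ G.degree w, G.degree w ^ (Fintype.card VH - 1)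
  have hE : (E : ℝ) / Fintype.card VG ≤ lam := by
    push_cast [E, sum_filter]
    exact hlam
  have hlow : ∑ v, #(G.truncatedFiber A S o Δ v) ≤ #A := by omega
  have hup : #A ≤ ∑ v, #(G.truncatedFiber A S o Δ v) + #S * E := by omega
  refine ⟨by gcongr; exact_mod_cast hlow, ?_⟩
  calc (#A : ℝ) / Fintype.card VG
      ≤ ((∑ v, (#(G.truncatedFiber A S o Δ v) : ℝ)) + #S * E) / Fintype.card VG := by
        gcongr
        exact_mod_cast hup
    _ = (∑ v, (#(G.truncatedFiber A S o Δ v) : ℝ)) / Fintype.card VG +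
          #S * (E / Fintype.card VG) := by ring
    _ ≤ _ := by gcongr

end Connected

end SimpleGraph

/-- The `N` i.i.d. uniform samples are modelled by the uniform distribution on `Fin N → VG`:
an event has probability its cardinality divided by `n ^ N`. -/
theorem sampling_hoeffding_general
    {VH VG : Type*} [Fintype VH] [Fintype VG]
    (H : SimpleGraph VH) (G : SimpleGraph VG) (o : VH)
    (h n : ℕ) (hcard : Fintype.card VH = h)
    (hn : Fintype.card VG = n) (hn1 : 1 ≤ n)
    (T : SimpleGraph VH) (hTle : T ≤ H) (hTtree : T.IsTree)
    (Δ : ℕ) (lam : ℝ)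
    (hexp : (∑ v : VG, if Δ ≤ G.degree v then (G.degree v : ℝ) ^ (h - 1) else 0) / n
              ≤ lam)
    (Xbar : VG → ℕ)
    (hXbar : ∀ v : VG, Xbar v =
      (Finset.univ.filter
        (fun σ : VH → VG =>
          (∀ a b, H.Adj a b → G.Adj (σ a) (σ b)) ∧ Function.Injective σ ∧
          σ o = v ∧
          ∀ u : VH, (1 < T.degree u ∨ u = o) → G.degree (σ u) < Δ)).card)
    (iT : ℕ)
    (hiT : iT = (Finset.univ.filter (fun u : VH => 1 < T.degree u ∨ u = o)).card)
    (emb : ℕ)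
    (hemb : emb = (Finset.univ.filter
      (fun σ : VH → VG =>
        (∀ a b, H.Adj a b → G.Adj (σ a) (σ b)) ∧ Function.Injective σ)).card)
    (s p : ℝ) (hs : 0 < s) (hp0 : 0 < p)
    (N : ℕ)
    (hN : ((Δ - 1 : ℕ) : ℝ) ^ (2 * (h - 1)) * Real.log (2 / p) / (2 * s ^ 2)
            ≤ (N : ℝ)) :
    (1 - p) * (n : ℝ) ^ N ≤
      ((Finset.univ.filter
        (fun ω : Fin N → VG =>
          (∑ i : Fin N, (Xbar (ω i) : ℝ)) / N - s ≤ (emb : ℝ) / n ∧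
          (emb : ℝ) / n ≤ (∑ i : Fin N, (Xbar (ω i) : ℝ)) / N + s + iT * lam)).card
        : ℝ) := by
  subst hcard hn hiT hemb
  set S : Finset VH := {u | 1 < T.degree u ∨ u = o}
  set A : Finset (VH → VG) :=
    {σ | (∀ a b, H.Adj a b → G.Adj (σ a) (σ b)) ∧ Function.Injective σ}
  have hT := hTtree.connected
  have hS : ∀ u, 1 < T.degree u → u ∈ S := fun u hu => by simp [S, hu]
  have hA : ∀ σ ∈ A, ∀ a b, T.Adj a b → G.Adj (σ a) (σ b) :=
    fun σ hσ a b hab => (mem_filter.1 hσ).2.1 a b (hTle hab)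
  have hXbar' (v : VG) : Xbar v = #(G.truncatedFiber A S o Δ v) := by
    simp only [hXbar, truncatedFiber, A, S, filter_filter, and_assoc, mem_filter, mem_univ,
      true_and]
  have hX (v : VG) : (Xbar v : ℝ) ∈ Set.Icc 0 (((Δ - 1 : ℕ) : ℝ) ^ (Fintype.card VH - 1)) :=
    ⟨Nat.cast_nonneg _, by
      exact_mod_cast hXbar' v ▸ hT.card_truncatedFiber_le_pow G hS hA (by simp [S]) Δ v⟩
  obtain ⟨hlow, hup⟩ := hT.truncated_sidorenko G hS hA o Δ hexp
  simp only [← hXbar'] at hlow hup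
  have : Nonempty VG := Fintype.card_pos_iff.1 hn1
  refine (one_sub_mul_le_card_abs_sum_div_sub_mean_le _ hX hs hp0
    (by rwa [← pow_mul, mul_comm (Fintype.card VH - 1)])).trans ?_
  refine Nat.cast_le.2 (card_le_card (monotone_filter_right _ fun ω _ hω => ?_))
  rw [abs_le] at hω
  constructor <;> linarith

/-- Sampling theorem (Theorem 1.3 of the paper): sampling `N` i.i.d. uniform vertices
`v*_1, …, v*_N` of `G` (modelled by the uniform distribution on `Fin N → V(G)`, so
probabilities are counting fractions with denominator `n^N`), if
`E[D^(h-1) 1[D ≥ Δ]] ≤ λ` and `N ≥ (Δ-1)^(2(h-1)) ln(2/p) / (2s²)`, then with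
probability at least `1 - p` we have
`X̂_N - s ≤ emb(H,G)/n ≤ X̂_N + s + i_T λ`. -/
theorem sampling_hoeffding
    {VH VG : Type*} [Fintype VH] [Fintype VG]
    (H : SimpleGraph VH) (G : SimpleGraph VG) (o : VH)
    (h n : ℕ) (hh : 1 ≤ h) (hcard : Fintype.card VH = h)
    (hn : Fintype.card VG = n) (hn1 : 1 ≤ n) (hconn : H.Connected)
    (T : SimpleGraph VH) (hTle : T ≤ H) (hTtree : T.IsTree)
    (Δ : ℕ) (hΔ : 0 < Δ) (lam : ℝ) (hlam : 0 ≤ lam)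
    (hexp : (∑ v : VG, if Δ ≤ G.degree v then (G.degree v : ℝ) ^ (h - 1) else 0) / n
              ≤ lam)
    (Xbar : VG → ℕ)
    (hXbar : ∀ v : VG, Xbar v =
      (Finset.univ.filter
        (fun σ : VH → VG =>
          (∀ a b, H.Adj a b → G.Adj (σ a) (σ b)) ∧ Function.Injective σ ∧
          σ o = v ∧
          ∀ u : VH, (1 < T.degree u ∨ u = o) → G.degree (σ u) < Δ)).card)
    (iT : ℕ)
    (hiT : iT = (Finset.univ.filter (fun u : VH => 1 < T.degree u ∨ u = o)).card)
    (emb : ℕ)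
    (hemb : emb = (Finset.univ.filter
      (fun σ : VH → VG =>
        (∀ a b, H.Adj a b → G.Adj (σ a) (σ b)) ∧ Function.Injective σ)).card)
    (s p : ℝ) (hs : 0 < s) (hp0 : 0 < p) (hp1 : p ≤ 1)
    (N : ℕ)
    (hN : ((Δ - 1 : ℕ) : ℝ) ^ (2 * (h - 1)) * Real.log (2 / p) / (2 * s ^ 2)
            ≤ (N : ℝ)) :
    (1 - p) * (n : ℝ) ^ N ≤
      ((Finset.univ.filter
        (fun ω : Fin N → VG =>
          (∑ i : Fin N, (Xbar (ω i) : ℝ)) / N - s ≤ (emb : ℝ) / n ∧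
          (emb : ℝ) / n ≤ (∑ i : Fin N, (Xbar (ω i) : ℝ)) / N + s + iT * lam)).card
        : ℝ) :=
  sampling_hoeffding_general H G o h n hcard hn hn1 T hTle hTtree Δ lam hexp Xbar hXbar iT hiT emb
    hemb s p hs hp0 N hN
end

section
/- Let H be a fixed connected graph on h vertices with root o, and let (G_n) be a sequence of finite graphs. Let v_n be a uniformly random vertex of G_n, D_n its degree, and X_n := X(H, G_n, v_n) the number of embeddings of H into G_n mapping o to v_n. If X_n converges in distribution to a random variable X* and the sequence (D_n^{h−1}) is uniformly integrable, then |V(G_n)|^{−1} emb(H, G_n) → E[X*] as n → ∞. -/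
/-!
Summing over the root, `emb(H, G_n) / |V(G_n)| = E[X_n]`. For every `K`, `x ↦ min x K` is
eventually constant, so convergence of the point masses gives `E[X_n ∧ K] → E[X* ∧ K]`; since
`X_n ∧ K ≤ X_n`, this is the lower bound.

For the upper bound, an embedding rooted at `v` whose image avoids vertices of degree `≥ Δ` is
built from `v` by placing the other `h - 1` vertices of the connected graph `H` one at a time,
each among the `≤ Δ - 1` neighbours of an already placed vertex. The remaining embeddings are
charged to the vertex of maximal degree in their image, which gives
`E[X_n] ≤ E[X_n ∧ (Δ - 1)^(h-1)] + h E[D_n^(h-1) 1[D_n ≥ Δ]]`, and uniform integrability makes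
the last term uniformly small. The same bound shows that `E[X* ∧ K]` is bounded, so `X*` is
integrable.
-/

open Finset SimpleGraph MeasureTheory Filter
open scoped Classical Topology ENNReal

section Embeddings

variable {VH V : Type*}

abbrev IsGraphHom (H : SimpleGraph VH) (G : SimpleGraph V) (σ : VH → V) : Prop :=
  ∀ a b, H.Adj a b → G.Adj (σ a) (σ b)

variable [Fintype VH] [Fintype V] {H : SimpleGraph VH} {G : SimpleGraph V}

/-- Injective homomorphisms: the paper's embeddings, not Mathlib's induced embeddings `H ↪g G`. -/
noncomputable def embeddings (H : SimpleGraph VH) (G : SimpleGraph V) : Finset (VH → V) :=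
  {σ | IsGraphHom H G σ ∧ Function.Injective σ}

/-- A vertex of `t` adjacent to a vertex outside `t` has at most `d` possible images. -/
lemma card_hom_degree_le_eqOn_compl_le (hconn : H.Connected) (d : ℕ) {a : VH}
    (t : Finset VH) (hat : a ∉ t) (f₀ : VH → V) :
    #{σ | IsGraphHom H G σ ∧ (∀ b, G.degree (σ b) ≤ d) ∧ ∀ b ∉ t, σ b = f₀ b} ≤ d ^ #t := by
  induction t using Finset.strongInduction generalizing f₀ with
  | _ t ih =>
  rcases t.eq_empty_or_nonempty with rfl | ⟨c, hc⟩
  · refine card_le_one.2 fun σ hσ τ hτ => funext fun b => ?_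
    simp only [mem_filter, mem_univ, true_and, notMem_empty, not_false_eq_true,
      forall_const] at hσ hτ
    rw [hσ.2.2, hτ.2.2]
  obtain ⟨w⟩ := hconn a c
  obtain ⟨⟨⟨p, q⟩, hpq⟩, -, hp, hq⟩ :=
    w.exists_boundary_dart {x | x ∉ t} hat (by simpa using hc)
  simp only [Set.mem_ofPred_eq, not_not] at hp hq
  by_cases hdeg : G.degree (f₀ p) ≤ d
  swap
  · refine (card_eq_zero.2 (filter_eq_empty_iff.2 fun σ _ hσ => hdeg ?_)).trans_le
      (Nat.zero_le _)
    exact hσ.2.2 p hp ▸ hσ.2.1 p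
  have hsub : ({σ | IsGraphHom H G σ ∧ (∀ b, G.degree (σ b) ≤ d) ∧ ∀ b ∉ t, σ b = f₀ b} :
      Finset (VH → V)) ⊆ (G.neighborFinset (f₀ p)).biUnion fun w =>
        {σ | IsGraphHom H G σ ∧ (∀ b, G.degree (σ b) ≤ d) ∧
          ∀ b ∉ t.erase q, σ b = Function.update f₀ q w b} := by
    intro σ hσ
    simp only [mem_filter, mem_univ, true_and] at hσ
    refine mem_biUnion.2 ⟨σ q, ?_, ?_⟩
    · rw [mem_neighborFinset, ← hσ.2.2 p hp]
      exact hσ.1 p q hpq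
    · simp only [mem_filter, mem_univ, true_and]
      refine ⟨hσ.1, hσ.2.1, fun b hb => ?_⟩
      rcases eq_or_ne b q with rfl | hbq
      · simp
      · rw [Function.update_of_ne hbq, hσ.2.2 b fun hbt => hb (mem_erase.2 ⟨hbq, hbt⟩)]
  calc _ ≤ ∑ w ∈ G.neighborFinset (f₀ p), d ^ #(t.erase q) :=
        (card_le_card hsub).trans <| card_biUnion_le.trans <| sum_le_sum fun w _ =>
          ih _ (erase_ssubset hq) (fun h => hat (mem_of_mem_erase h)) _
    _ = G.degree (f₀ p) * d ^ #(t.erase q) := by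
      rw [sum_const, card_neighborFinset_eq_degree, smul_eq_mul]
    _ ≤ d * d ^ #(t.erase q) := Nat.mul_le_mul_right _ hdeg
    _ = d ^ #t := by rw [← card_erase_add_one hq, pow_succ, mul_comm]

lemma card_rooted_hom_degree_le_le (hconn : H.Connected) (a : VH) (u : V) (d : ℕ) :
    #{σ | IsGraphHom H G σ ∧ σ a = u ∧ ∀ b, G.degree (σ b) ≤ d} ≤
      d ^ (Fintype.card VH - 1) := by
  have hsub : ({σ | IsGraphHom H G σ ∧ σ a = u ∧ ∀ b, G.degree (σ b) ≤ d} :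
      Finset (VH → V)) ⊆ ({σ | IsGraphHom H G σ ∧ (∀ b, G.degree (σ b) ≤ d) ∧
        ∀ b ∉ univ.erase a, σ b = (fun _ => u) b} : Finset (VH → V)) := by
    intro σ hσ
    simp only [mem_filter, mem_univ, true_and, mem_erase, ne_eq, and_true, not_not] at hσ ⊢
    exact ⟨hσ.1, hσ.2.2, fun b hb => hb ▸ hσ.2.1⟩
  calc _ ≤ d ^ #(univ.erase a) := (card_le_card hsub).trans <|
        card_hom_degree_le_eqOn_compl_le hconn d _ (notMem_erase a univ) _
    _ = d ^ (Fintype.card VH - 1) := by rw [card_erase_of_mem (mem_univ a), card_univ]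

/-- Charge each homomorphism to a vertex `a` of `H` whose image has maximal degree. -/
lemma card_hom_exists_degree_ge_le (hconn : H.Connected) (Δ : ℕ) :
    #{σ | IsGraphHom H G σ ∧ ∃ a, Δ ≤ G.degree (σ a)} ≤
      Fintype.card VH * ∑ u with Δ ≤ G.degree u, G.degree u ^ (Fintype.card VH - 1) := by
  have hsub : ({σ | IsGraphHom H G σ ∧ ∃ a, Δ ≤ G.degree (σ a)} : Finset (VH → V)) ⊆
      (univ : Finset VH).biUnion fun a => ({u | Δ ≤ G.degree u} : Finset V).biUnion fun u =>
        {σ | IsGraphHom H G σ ∧ σ a = u ∧ ∀ b, G.degree (σ b) ≤ G.degree u} := by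
    intro σ hσ
    simp only [mem_filter, mem_univ, true_and] at hσ
    obtain ⟨hhom, a₀, ha₀⟩ := hσ
    obtain ⟨a, -, hmax⟩ := exists_max_image univ (fun a => G.degree (σ a)) ⟨a₀, mem_univ _⟩
    simp only [mem_biUnion, mem_filter, mem_univ, true_and]
    exact ⟨a, σ a, ha₀.trans (hmax a₀ (mem_univ _)), hhom, rfl, fun b => hmax b (mem_univ _)⟩
  calc _ ≤ ∑ _a : VH, ∑ u with Δ ≤ G.degree u, G.degree u ^ (Fintype.card VH - 1) :=
        (card_le_card hsub).trans <| card_biUnion_le.trans <| sum_le_sum fun a _ =>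
          card_biUnion_le.trans <| sum_le_sum fun u _ =>
            card_rooted_hom_degree_le_le hconn a u _
    _ = _ := by rw [sum_const, card_univ, smul_eq_mul]

/-- The truncated Sidorenko inequality. -/
lemma card_embeddings_le (hconn : H.Connected) (o : VH) (Δ : ℕ) :
    #(embeddings H G) ≤
      ∑ v, min #{σ ∈ embeddings H G | σ o = v} ((Δ - 1) ^ (Fintype.card VH - 1)) +
        Fintype.card VH * ∑ u with Δ ≤ G.degree u, G.degree u ^ (Fintype.card VH - 1) := by
  have hfiber : ∀ s : Finset (VH → V), #s = ∑ v, #{σ ∈ s | σ o = v} := fun s =>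
    card_eq_sum_card_fiberwise fun σ _ => mem_univ (σ o)
  have hsplit : ∀ v, #{σ ∈ embeddings H G | σ o = v} ≤
      min #{σ ∈ embeddings H G | σ o = v} ((Δ - 1) ^ (Fintype.card VH - 1)) +
        #{σ ∈ {σ ∈ embeddings H G | σ o = v} | ∃ a, Δ ≤ G.degree (σ a)} := by
    intro v
    have hsmall : #{σ ∈ {σ ∈ embeddings H G | σ o = v} | ¬∃ a, Δ ≤ G.degree (σ a)} ≤
        (Δ - 1) ^ (Fintype.card VH - 1) := by
      refine (card_le_card fun σ hσ => ?_).trans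
        (card_rooted_hom_degree_le_le (G := G) hconn o v (Δ - 1))
      simp only [embeddings, mem_filter, mem_univ, true_and, not_exists, not_le] at hσ ⊢
      exact ⟨hσ.1.1.1, hσ.1.2, fun b => Nat.le_pred_of_lt (hσ.2 b)⟩
    have := card_filter_add_card_filter_not (s := {σ ∈ embeddings H G | σ o = v})
      (fun σ => ∃ a, Δ ≤ G.degree (σ a))
    omega
  have hlarge : #{σ ∈ embeddings H G | ∃ a, Δ ≤ G.degree (σ a)} ≤
      #{σ | IsGraphHom H G σ ∧ ∃ a, Δ ≤ G.degree (σ a)} := by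
    refine card_le_card fun σ hσ => ?_
    simp only [embeddings, mem_filter, mem_univ, true_and] at hσ ⊢
    exact ⟨hσ.1.1, hσ.2⟩
  calc #(embeddings H G) = ∑ v, #{σ ∈ embeddings H G | σ o = v} := hfiber _
    _ ≤ _ := sum_le_sum fun v _ => hsplit v
    _ = ∑ v, min #{σ ∈ embeddings H G | σ o = v} ((Δ - 1) ^ (Fintype.card VH - 1)) +
          #{σ ∈ embeddings H G | ∃ a, Δ ≤ G.degree (σ a)} := by
      simp only [sum_add_distrib, filter_comm (fun σ : VH → V => σ o = _), ← hfiber]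
    _ ≤ _ := Nat.add_le_add_left (hlarge.trans (card_hom_exists_degree_ge_le hconn Δ)) _

lemma card_embeddings_div_card_le (hconn : H.Connected) (o : VH) (Δ : ℕ) :
    (#(embeddings H G) : ℝ) / Fintype.card V ≤
      (∑ v, ((min #{σ ∈ embeddings H G | σ o = v} ((Δ - 1) ^ (Fintype.card VH - 1)) : ℕ) : ℝ))
          / Fintype.card V +
        Fintype.card VH * ((∑ v, if Δ ≤ G.degree v then
          (G.degree v : ℝ) ^ (Fintype.card VH - 1) else 0) / Fintype.card V) := by
  rw [mul_div_assoc', ← add_div, ← sum_filter]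
  gcongr
  exact_mod_cast card_embeddings_le (G := G) hconn o Δ

end Embeddings

section Truncation

lemma eq_add_sum_ite_of_eventually_const {g : ℕ → ℝ} {c : ℝ} {K : ℕ}
    (hg : ∀ k, K ≤ k → g k = c) (x : ℕ) :
    g x = c + ∑ k ∈ range K, (g k - c) * if x = k then 1 else 0 := by
  rcases lt_or_ge x K with hx | hx
  · simp [mul_ite, sum_ite_eq, hx]
  · rw [hg x hx, left_eq_add]
    exact sum_eq_zero fun k hk => by simp [(mem_range.1 hk).trans_le hx |>.ne']

lemma tendsto_sum_div_card_of_eventually_const {V : ℕ → Type*} [∀ n, Fintype (V n)]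
    [∀ n, Nonempty (V n)] {Y : ∀ n, V n → ℕ} {p : ℕ → ℝ}
    (hY : ∀ k, Tendsto (fun n => (#{v | Y n v = k} : ℝ) / Fintype.card (V n)) atTop (𝓝 (p k)))
    {g : ℕ → ℝ} {c : ℝ} {K : ℕ} (hg : ∀ k, K ≤ k → g k = c) :
    Tendsto (fun n => (∑ v, g (Y n v)) / Fintype.card (V n)) atTop
      (𝓝 (c + ∑ k ∈ range K, (g k - c) * p k)) := by
  have hsum : ∀ n, (∑ v, g (Y n v)) / Fintype.card (V n) =
      c + ∑ k ∈ range K, (g k - c) * ((#{v | Y n v = k} : ℝ) / Fintype.card (V n)) := by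
    intro n
    have hN : (Fintype.card (V n) : ℝ) ≠ 0 := Nat.cast_ne_zero.2 Fintype.card_ne_zero
    rw [sum_congr rfl fun v _ => eq_add_sum_ite_of_eventually_const hg (Y n v), sum_add_distrib,
      sum_comm, add_div, sum_const, card_univ, nsmul_eq_mul, mul_div_cancel_left₀ _ hN]
    simp only [← mul_sum, sum_boole, sum_div, mul_div_assoc]
  simp only [hsum]
  exact tendsto_const_nhds.add (tendsto_finsetSum _ fun k _ => (hY k).const_mul _)

lemma tendsto_of_tendsto_truncations {e : ℕ → ℝ} {m : ℕ → ℕ → ℝ} {I : ℕ → ℝ} {L : ℝ}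
    (hm : ∀ K, Tendsto (fun n => m n K) atTop (𝓝 (I K))) (hI : Tendsto I atTop (𝓝 L))
    (hIL : ∀ K, I K ≤ L) (hme : ∀ n K, m n K ≤ e n)
    (hem : ∀ ε > 0, ∃ K, ∀ n, e n ≤ m n K + ε) :
    Tendsto e atTop (𝓝 L) := by
  refine tendsto_order.2 ⟨fun a ha => ?_, fun b hb => ?_⟩
  · obtain ⟨K, hK⟩ := (hI.eventually (eventually_gt_nhds ha)).exists
    exact ((hm K).eventually (eventually_gt_nhds hK)).mono fun n hn => hn.trans_le (hme n K)
  · obtain ⟨K, hK⟩ := hem ((b - L) / 2) (by linarith)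
    filter_upwards [(hm K).eventually (eventually_lt_nhds (lt_add_of_pos_right (I K)
      (show 0 < (b - L) / 2 by linarith)))] with n hn
    linarith [hK n, hIL K]

variable {Ω : Type*} [MeasurableSpace Ω] {P : Measure Ω} {f : Ω → ℕ}

lemma integral_comp_of_eventually_const [IsProbabilityMeasure P] (hf : Measurable f)
    {g : ℕ → ℝ} {c : ℝ} {K : ℕ} (hg : ∀ k, K ≤ k → g k = c) :
    ∫ ω, g (f ω) ∂P = c + ∑ k ∈ range K, (g k - c) * P.real {ω | f ω = k} := by
  have hind : ∀ k, (fun ω => if f ω = k then (1 : ℝ) else 0) = {ω | f ω = k}.indicator 1 :=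
    fun k => by ext ω; simp [Set.indicator_apply]
  have hmeas : ∀ k, MeasurableSet {ω | f ω = k} := fun k => hf (measurableSet_singleton k)
  have hint : ∀ k, Integrable (fun ω => if f ω = k then (1 : ℝ) else 0) P := fun k => by
    rw [hind k]; exact (integrable_const 1).indicator (hmeas k)
  simp_rw [eq_add_sum_ite_of_eventually_const hg (f _)]
  rw [integral_add (integrable_const c) (integrable_finsetSum _ fun k _ => (hint k).const_mul _),
    integral_finsetSum _ fun k _ => (hint k).const_mul _]
  simp only [integral_const, probReal_univ, one_smul, integral_const_mul, hind,
    integral_indicator_one (hmeas _)]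

lemma integrable_natCast_min (hf : Measurable f) [IsFiniteMeasure P] (K : ℕ) :
    Integrable (fun ω => ((min (f ω) K : ℕ) : ℝ)) P :=
  (integrable_const (K : ℝ)).mono' (by fun_prop) <| ae_of_all _ fun ω => by
    rw [Real.norm_eq_abs, abs_of_nonneg (Nat.cast_nonneg _)]
    exact_mod_cast min_le_right (f ω) K

lemma integrable_natCast_of_integral_min_le [IsFiniteMeasure P] (hf : Measurable f) {C : ℝ}
    (hC : ∀ K : ℕ, ∫ ω, ((min (f ω) K : ℕ) : ℝ) ∂P ≤ C) : Integrable (fun ω => (f ω : ℝ)) P := by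
  refine ⟨by fun_prop, ?_⟩
  have hlim : Tendsto (fun K : ℕ => ∫⁻ ω, ((min (f ω) K : ℕ) : ℝ≥0∞) ∂P) atTop
      (𝓝 (∫⁻ ω, (f ω : ℝ≥0∞) ∂P)) :=
    lintegral_tendsto_of_tendsto_of_monotone (fun K => by fun_prop)
      (ae_of_all _ fun ω K K' hKK' => by simpa using min_le_min_left (f ω) hKK')
      (ae_of_all _ fun ω => tendsto_atTop_of_eventually_const fun K hK => by
        rw [min_eq_left hK])
  have hle : ∫⁻ ω, (f ω : ℝ≥0∞) ∂P ≤ ENNReal.ofReal C := by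
    refine le_of_tendsto' hlim fun K => ?_
    simp_rw [← ENNReal.ofReal_natCast]
    rw [← ofReal_integral_eq_lintegral_ofReal (integrable_natCast_min hf K)
      (ae_of_all _ fun _ => Nat.cast_nonneg _)]
    exact ENNReal.ofReal_le_ofReal (hC K)
  show ∫⁻ ω, ‖(f ω : ℝ)‖ₑ ∂P < ∞
  simp only [Real.enorm_natCast]
  exact hle.trans_lt ENNReal.ofReal_lt_top

lemma tendsto_integral_of_truncations [IsFiniteMeasure P] (hf : Measurable f) {e : ℕ → ℝ}
    {m : ℕ → ℕ → ℝ}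
    (hm : ∀ K, Tendsto (fun n => m n K) atTop (𝓝 (∫ ω, ((min (f ω) K : ℕ) : ℝ) ∂P)))
    (hme : ∀ n K, m n K ≤ e n) (hem : ∀ ε > 0, ∃ K, ∀ n, e n ≤ m n K + ε) :
    Tendsto e atTop (𝓝 (∫ ω, (f ω : ℝ) ∂P)) := by
  obtain ⟨K₁, hK₁⟩ := hem 1 one_pos
  have hbound : ∀ K : ℕ,
      ∫ ω, ((min (f ω) K : ℕ) : ℝ) ∂P ≤ ∫ ω, ((min (f ω) K₁ : ℕ) : ℝ) ∂P + 1 :=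
    fun K => sub_le_iff_le_add'.1 <| le_of_tendsto' ((hm K).sub (hm K₁)) fun n => by
      linarith [hme n K, hK₁ n]
  have hint := integrable_natCast_of_integral_min_le hf hbound
  refine tendsto_of_tendsto_truncations hm ?_ (fun K => integral_mono (integrable_natCast_min hf K)
    hint fun ω => Nat.cast_le.2 (min_le_left (f ω) K)) hme hem
  exact integral_tendsto_of_tendsto_of_monotone (integrable_natCast_min hf) hint
    (ae_of_all _ fun ω K K' hKK' => by simpa using min_le_min_left (f ω) hKK')
    (ae_of_all _ fun ω => tendsto_atTop_of_eventually_const fun K hK => by rw [min_eq_left hK])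

end Truncation

/-- For ℕ-valued variables, convergence in distribution is pointwise convergence of the point
masses; the uniformly random vertex is encoded by counting fractions. -/
theorem emb_density_tendsto_of_tendsto_distribution
    {VH : Type*} [Fintype VH]
    (H : SimpleGraph VH) (o : VH)
    (h : ℕ) (hcard : Fintype.card VH = h) (hconn : H.Connected)
    (V : ℕ → Type*) [∀ n, Fintype (V n)] [∀ n, Nonempty (V n)]
    (G : ∀ n, SimpleGraph (V n))
    -- `X n v`: number of embeddings of `H` into `G n` mapping `o` to `v`
    (X : ∀ n, V n → ℕ)
    (hX : ∀ n v, X n v = (Finset.univ.filter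
      (fun σ : VH → V n =>
        (∀ a b, H.Adj a b → (G n).Adj (σ a) (σ b)) ∧ Function.Injective σ ∧
        σ o = v)).card)
    -- `emb(H, G n)`
    (emb : ℕ → ℕ)
    (hemb : ∀ n, emb n = (Finset.univ.filter
      (fun σ : VH → V n =>
        (∀ a b, H.Adj a b → (G n).Adj (σ a) (σ b)) ∧ Function.Injective σ)).card)
    -- the limit random variable `X*` on a probability space `(Ω, P)`
    {Ω : Type*} [MeasurableSpace Ω] (P : Measure Ω) [IsProbabilityMeasure P]
    (Xstar : Ω → ℕ) (hXstarMeas : Measurable Xstar)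
    -- `X_n → X*` in distribution (pointwise convergence of point masses)
    (hdist : ∀ k : ℕ,
      Tendsto
        (fun n => ((Finset.univ.filter (fun v : V n => X n v = k)).card : ℝ)
                    / Fintype.card (V n))
        atTop (𝓝 (P {ω | Xstar ω = k}).toReal))
    -- uniform integrability of `D_n^(h-1)`
    (hUI : ∀ ε : ℝ, 0 < ε → ∃ Δ : ℕ, ∀ n,
      (∑ v : V n, if Δ ≤ (G n).degree v then ((G n).degree v : ℝ) ^ (h - 1) else 0)
        / Fintype.card (V n) ≤ ε) :
    Tendsto (fun n => (emb n : ℝ) / Fintype.card (V n)) atTop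
      (𝓝 (∫ ω, (Xstar ω : ℝ) ∂P)) := by
  subst hcard
  have hX' : ∀ n v, X n v = #{σ ∈ embeddings H (G n) | σ o = v} := fun n v => by
    rw [hX, embeddings, filter_filter]
    simp only [and_assoc]
  have hemb' : ∀ n, emb n = #(embeddings H (G n)) := hemb
  refine tendsto_integral_of_truncations hXstarMeas
    (m := fun n K => (∑ v, ((min (X n v) K : ℕ) : ℝ)) / Fintype.card (V n))
    (fun K => ?_) (fun n K => ?_) (fun ε hε => ?_)
  · have hK : ∀ k, K ≤ k → ((min k K : ℕ) : ℝ) = K := fun k hk => by rw [min_eq_right hk]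
    rw [integral_comp_of_eventually_const hXstarMeas hK]
    exact tendsto_sum_div_card_of_eventually_const hdist hK
  · have hsum : emb n = ∑ v, X n v := by
      simp only [hemb', hX']
      exact card_eq_sum_card_fiberwise fun σ _ => mem_univ (σ o)
    gcongr
    rw [hsum]
    push_cast
    exact sum_le_sum fun v _ => min_le_left _ _
  · obtain ⟨Δ, hΔ⟩ := hUI (ε / (Fintype.card VH + 1)) (by positivity)
    have hε : (Fintype.card VH : ℝ) * (ε / (Fintype.card VH + 1)) ≤ ε := by
      rw [mul_div_assoc', div_le_iff₀ (by positivity)]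
      nlinarith
    refine ⟨(Δ - 1) ^ (Fintype.card VH - 1), fun n => ?_⟩
    calc (emb n : ℝ) / Fintype.card (V n) ≤ _ := by
          simpa only [← hemb', ← hX'] using card_embeddings_div_card_le (G := G n) hconn o Δ
      _ ≤ _ := by gcongr; exact (mul_le_mul_of_nonneg_left (hΔ n) (by positivity)).trans hε
end

section
/- For any tree T on h ≥ 1 vertices and any finite graph G, hom(T,G) ≤ Σ_{v ∈ V(G)} d_v^{h−1}, where d_v is the degree of v in G. -/
/-!
Sidorenko's induction proves, for every weight `k : V(T) → ℕ`, the stronger bound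
`∑_{f ∈ Hom(T, G)} ∏_t d(f t)^(k t) ≤ ∑_v d_v^(|T| - 1 + ∑_t k t)`; the theorem is `k = 0`.
A leaf `u` with `k u = 0` can be deleted: the image of `u` ranges over the `d(f p)` neighbours of
the image of its neighbour `p`, so the weight of `p` goes up by one.
For two distinct leaves with weights `a` and `b`, weighted AM-GM
`(a + b) x^a y^b ≤ a x^(a+b) + b y^(a+b)` bounds the sum by a convex combination of the two sums
in which the whole weight `a + b` sits on one of the leaves, so that the other one is deletable.
-/

open Finset SimpleGraph
open scoped Classical

lemma add_mul_pow_mul_pow_le (a b : ℕ) {x y : ℝ} (hx : 0 ≤ x) (hy : 0 ≤ y) :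
    (a + b : ℝ) * (x ^ a * y ^ b) ≤ a * x ^ (a + b) + b * y ^ (a + b) := by
  rcases Nat.eq_zero_or_pos (a + b) with hab | hab
  · obtain ⟨rfl, rfl⟩ : a = 0 ∧ b = 0 := by omega
    simp
  have hab' : (0 : ℝ) < a + b := by exact_mod_cast hab
  have root {z : ℝ} (hz : 0 ≤ z) (c : ℕ) : (z ^ (a + b)) ^ ((c : ℝ) / (a + b)) = z ^ c := by
    rw [← Real.rpow_natCast z (a + b), ← Real.rpow_mul hz, ← Real.rpow_natCast]
    congr 1
    push_cast
    field_simp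
  have amgm := Real.geom_mean_le_arith_mean2_weighted (p₁ := x ^ (a + b)) (p₂ := y ^ (a + b))
    (div_nonneg a.cast_nonneg hab'.le) (div_nonneg b.cast_nonneg hab'.le) (by positivity)
    (by positivity) (by field_simp)
  rw [root hx, root hy] at amgm
  calc (a + b : ℝ) * (x ^ a * y ^ b)
      ≤ (a + b) * (a / (a + b) * x ^ (a + b) + b / (a + b) * y ^ (a + b)) := by gcongr
    _ = a * x ^ (a + b) + b * y ^ (a + b) := by field_simp

lemma Fintype.prod_pow_add_single {ι M : Type*} [Fintype ι] [DecidableEq ι] [CommMonoid M]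
    (x : ι → M) (κ : ι → ℕ) (i : ι) (n : ℕ) :
    ∏ t, x t ^ (κ + Pi.single i n : ι → ℕ) t = (∏ t, x t ^ κ t) * x i ^ n := by
  simp only [Pi.add_apply, pow_add, prod_mul_distrib]
  congr 1
  rw [Fintype.prod_eq_single i fun t ht => by simp [ht], Pi.single_eq_same]

lemma exists_eq_add_single_add_single {ι : Type*} [DecidableEq ι] (k : ι → ℕ) {i j : ι}
    (hij : i ≠ j) : ∃ (κ : ι → ℕ) (a b : ℕ),
      κ i = 0 ∧ κ j = 0 ∧ k = κ + Pi.single i a + Pi.single j b := by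
  refine ⟨Function.update (Function.update k i 0) j 0, k i, k j, by simp [hij], by simp, ?_⟩
  funext t
  by_cases hti : t = i <;> by_cases htj : t = j <;> simp_all

lemma exists_prod_compl_singleton_equiv_fun {V W : Type*} (u : V) :
    ∃ e : W × (({u}ᶜ : Set V) → W) ≃ (V → W),
      (∀ y g, e (y, g) u = y) ∧ ∀ y g (t : ({u}ᶜ : Set V)), e (y, g) t = g t := by
  have ne (t : ({u}ᶜ : Set V)) : (t : V) ≠ u := t.2
  refine ⟨{ toFun q x := if h : x = u then q.1 else q.2 ⟨x, h⟩
            invFun f := (f u, fun t => f t)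
            left_inv q := by ext t <;> simp [ne]
            right_inv f := by ext x; by_cases h : x = u <;> simp [h] }, by simp, by simp [ne]⟩

namespace SimpleGraph

variable {V W : Type*} [Fintype V] [Fintype W]

noncomputable def homFinset (T : SimpleGraph V) (G : SimpleGraph W) : Finset (V → W) :=
  univ.filter fun f => ∀ a b, T.Adj a b → G.Adj (f a) (f b)

noncomputable def degreeWeightedHomSum (T : SimpleGraph V) (G : SimpleGraph W)
    (k : V → ℕ) : ℝ :=
  ∑ f ∈ homFinset T G, ∏ t, (G.degree (f t) : ℝ) ^ k t

noncomputable def degreePowerSum (G : SimpleGraph W) (n : ℕ) : ℝ :=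
  ∑ v, (G.degree v : ℝ) ^ n

variable {T : SimpleGraph V} {G : SimpleGraph W}

lemma degreeWeightedHomSum_zero : degreeWeightedHomSum T G 0 = #(homFinset T G) := by
  simp [degreeWeightedHomSum]

lemma degreeWeightedHomSum_of_unique [Unique V] (k : V → ℕ) :
    degreeWeightedHomSum T G k = G.degreePowerSum (k default) := by
  have hom_univ : homFinset T G = univ :=
    eq_univ_of_forall fun f => by
      simp [homFinset, Subsingleton.elim _ (default : V)]
  rw [degreeWeightedHomSum, degreePowerSum, hom_univ]
  exact Fintype.sum_equiv (Equiv.funUnique V W) _ _ fun f => Fintype.prod_unique _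

lemma degreeWeightedHomSum_add_single_le (κ : V → ℕ) (i j : V) (a b : ℕ) :
    (a + b : ℝ) * degreeWeightedHomSum T G (κ + Pi.single i a + Pi.single j b)
      ≤ a * degreeWeightedHomSum T G (κ + Pi.single i (a + b))
        + b * degreeWeightedHomSum T G (κ + Pi.single j (a + b)) := by
  simp only [degreeWeightedHomSum, mul_sum, ← sum_add_distrib, Fintype.prod_pow_add_single]
  gcongr with f
  have amgm := add_mul_pow_mul_pow_le a b (G.degree (f i)).cast_nonneg (G.degree (f j)).cast_nonneg
  have hP : (0 : ℝ) ≤ ∏ t, (G.degree (f t) : ℝ) ^ κ t := by positivity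
  linarith [mul_le_mul_of_nonneg_left amgm hP]

lemma mem_homFinset_iff_of_forall_adj_iff {u : V} {p : ({u}ᶜ : Set V)}
    (hu : ∀ b, T.Adj u b ↔ b = p) (f : V → W) :
    f ∈ homFinset T G ↔
      (fun t : ({u}ᶜ : Set V) => f t) ∈ homFinset (T.induce {u}ᶜ) G ∧ G.Adj (f p) (f u) := by
  simp only [homFinset, mem_filter, mem_univ, true_and, comap_adj,
    Function.Embedding.subtype_apply, Subtype.forall]
  refine ⟨fun hf => ⟨fun a _ b _ hab => hf a b hab, hf _ _ ((hu p).2 rfl).symm⟩, ?_⟩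
  rintro ⟨hg, hp⟩ a b hab
  by_cases ha : a = u
  · subst ha
    rwa [(hu b).1 hab, G.adj_comm]
  by_cases hb : b = u
  · subst hb
    rwa [(hu a).1 hab.symm]
  exact hg a ha b hb hab

theorem degreeWeightedHomSum_eq_induce_compl_singleton {u : V} {p : ({u}ᶜ : Set V)}
    (hu : ∀ b, T.Adj u b ↔ b = p) {k : V → ℕ} (hk : k u = 0) :
    degreeWeightedHomSum T G k =
      degreeWeightedHomSum (T.induce {u}ᶜ) G ((fun t : ({u}ᶜ : Set V) => k t) + Pi.single p 1) := by
  obtain ⟨e, e_apply_self, e_apply_ne⟩ := exists_prod_compl_singleton_equiv_fun (W := W) u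
  have weight (y : W) (g : ({u}ᶜ : Set V) → W) : ∏ t, (G.degree (e (y, g) t) : ℝ) ^ k t
      = ∏ t : ({u}ᶜ : Set V), (G.degree (g t) : ℝ) ^ k t := by
    rw [Fintype.prod_eq_mul_prod_subtype_ne _ u, hk, pow_zero, one_mul]
    exact prod_congr rfl fun t _ => by rw [← e_apply_ne y g t]
  rw [degreeWeightedHomSum, degreeWeightedHomSum, ← univ_inter (homFinset T G), ← sum_ite_mem,
    ← e.sum_comp, Fintype.sum_prod_type_right,
    ← univ_inter (homFinset (T.induce {u}ᶜ) G), ← sum_ite_mem]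
  refine sum_congr rfl fun g _ => ?_
  simp only [mem_homFinset_iff_of_forall_adj_iff hu, weight, e_apply_self, e_apply_ne, ite_and]
  split_ifs with hg
  · rw [← sum_filter, sum_const, ← neighborFinset_eq_filter, card_neighborFinset_eq_degree,
      nsmul_eq_mul, Fintype.prod_pow_add_single (fun t => (G.degree (g t) : ℝ)), pow_one, mul_comm]
  · simp

lemma degreeWeightedHomSum_le_of_degree_eq_one {u : V} (hu : T.degree u = 1) {k : V → ℕ}
    (hk : k u = 0)
    (ih : ∀ k' : ({u}ᶜ : Set V) → ℕ, degreeWeightedHomSum (T.induce {u}ᶜ) G k' ≤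
      G.degreePowerSum (Fintype.card ({u}ᶜ : Set V) - 1 + ∑ t, k' t)) :
    degreeWeightedHomSum T G k ≤ G.degreePowerSum (Fintype.card V - 1 + ∑ t, k t) := by
  obtain ⟨p, hp, hp_unique⟩ := degree_eq_one_iff_existsUnique_adj.mp hu
  let p' : ({u}ᶜ : Set V) := ⟨p, hp.ne'⟩
  have hu' (b : V) : T.Adj u b ↔ b = p' := ⟨hp_unique b, by rintro rfl; exact hp⟩
  rw [degreeWeightedHomSum_eq_induce_compl_singleton hu' hk]
  refine (ih _).trans_eq ?_
  have hcard : Fintype.card ({u}ᶜ : Set V) = Fintype.card V - 1 := by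
    rw [Fintype.card_compl_set, Set.card_singleton]
  have hpos : 0 < Fintype.card ({u}ᶜ : Set V) := Fintype.card_pos_iff.mpr ⟨p'⟩
  have hsum : ∑ t : ({u}ᶜ : Set V), k t = ∑ t, k t := by
    rw [Fintype.sum_eq_add_sum_subtype_ne k u, hk, zero_add]
    rfl
  simp only [Pi.add_apply, sum_add_distrib, Fintype.sum_pi_single', hsum]
  congr 1
  omega

lemma degreeWeightedHomSum_le_of_forall_eq_zero_or_eq_zero {u₁ u₂ : V} (hne : u₁ ≠ u₂)
    {B : ℕ → ℝ} (h : ∀ k : V → ℕ, k u₁ = 0 ∨ k u₂ = 0 → degreeWeightedHomSum T G k ≤ B (∑ t, k t))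
    (k : V → ℕ) : degreeWeightedHomSum T G k ≤ B (∑ t, k t) := by
  obtain ⟨κ, a, b, hκ₁, hκ₂, rfl⟩ := exists_eq_add_single_add_single k hne
  rcases Nat.eq_zero_or_pos (a + b) with hab | hab
  · obtain ⟨rfl, rfl⟩ : a = 0 ∧ b = 0 := by omega
    exact h _ (.inl (by simp [hκ₁]))
  have sum_eq (i : V) : ∑ t, (κ + Pi.single i (a + b) : V → ℕ) t
      = ∑ t, (κ + Pi.single u₁ a + Pi.single u₂ b : V → ℕ) t := by
    simp only [Pi.add_apply, sum_add_distrib, Fintype.sum_pi_single', add_assoc]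
  have h₁ := h (κ + Pi.single u₁ (a + b)) (.inr (by simp [hκ₂, hne.symm]))
  have h₂ := h (κ + Pi.single u₂ (a + b)) (.inl (by simp [hκ₁, hne]))
  rw [sum_eq] at h₁ h₂
  refine le_of_mul_le_mul_left ?_ (by exact_mod_cast hab : (0 : ℝ) < a + b)
  calc _ ≤ _ := degreeWeightedHomSum_add_single_le (T := T) (G := G) κ u₁ u₂ a b
    _ ≤ a * B _ + b * B _ := by gcongr
    _ = (a + b) * B _ := by ring

variable (G) in
theorem IsTree.degreeWeightedHomSum_le (hT : T.IsTree) (k : V → ℕ) :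
    degreeWeightedHomSum T G k ≤ G.degreePowerSum (Fintype.card V - 1 + ∑ t, k t) := by
  obtain ⟨n, hn⟩ : ∃ n, Fintype.card V = n := ⟨_, rfl⟩
  induction n generalizing V with
  | zero =>
    have := hT.connected.nonempty
    exact absurd hn Fintype.card_ne_zero
  | succ n ih =>
    rcases n.eq_zero_or_pos with rfl | hn_pos
    · have : Unique V := (Fintype.card_eq_one_iff_nonempty_unique.mp hn).some
      simp [degreeWeightedHomSum_of_unique]
    have : Nontrivial V := Fintype.one_lt_card_iff_nontrivial.mp (by omega)
    have leaf {u : V} (hu : T.degree u = 1) {k : V → ℕ} (hk : k u = 0) :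
        degreeWeightedHomSum T G k ≤ G.degreePowerSum (Fintype.card V - 1 + ∑ t, k t) :=
      degreeWeightedHomSum_le_of_degree_eq_one hu hk fun k' =>
        ih ⟨hT.connected.induce_compl_singleton_of_degree_eq_one hu, hT.isAcyclic.induce _⟩ k'
          (by rw [Fintype.card_compl_set, Set.card_singleton]; omega)
    obtain ⟨u₁, u₂, hne, hu₁, hu₂⟩ := hT.exists_ne_and_degree_eq_one
    exact degreeWeightedHomSum_le_of_forall_eq_zero_or_eq_zero hne
      (B := fun s => G.degreePowerSum (Fintype.card V - 1 + s))
      (fun k hk => hk.elim (leaf hu₁) (leaf hu₂)) k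

end SimpleGraph

theorem sidorenko_tree_general
    {VT VG : Type*} [Fintype VT] [Fintype VG]
    (T : SimpleGraph VT) (G : SimpleGraph VG)
    (h : ℕ) (hcard : Fintype.card VT = h)
    (hTtree : T.IsTree) :
    (Finset.univ.filter
      (fun f : VT → VG => ∀ a b, T.Adj a b → G.Adj (f a) (f b))).card
      ≤ ∑ v : VG, (G.degree v) ^ (h - 1) := by
  have key := hTtree.degreeWeightedHomSum_le G 0
  rw [degreeWeightedHomSum_zero, degreePowerSum, hcard] at key
  simp only [Pi.zero_apply, sum_const_zero, add_zero] at key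
  exact_mod_cast key

/-- Sidorenko's tree inequality: for a tree `T` on `h ≥ 1` vertices and any finite
graph `G`, `hom(T,G) ≤ ∑_v d_v^(h-1)`. -/
theorem sidorenko_tree
    {VT VG : Type*} [Fintype VT] [Fintype VG]
    (T : SimpleGraph VT) (G : SimpleGraph VG)
    (h : ℕ) (hh : 1 ≤ h) (hcard : Fintype.card VT = h)
    (hTtree : T.IsTree) :
    (Finset.univ.filter
      (fun f : VT → VG => ∀ a b, T.Adj a b → G.Adj (f a) (f b))).card
      ≤ ∑ v : VG, (G.degree v) ^ (h - 1) :=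
  sidorenko_tree_general T G h hcard hTtree
end

section
/- Let H be a connected rooted graph on h ≥ 2 vertices with root o and let w ≠ o be a leaf of H with unique neighbor v. Let H' := H ∖ {w}. Then for any graph G, any Δ ≥ 0, and any non-negative weight vector α on V(H) with α_w = 0, the weighted count satisfies hom_{Δ,α}(H,G) = hom_{Δ,α'}(H',G), where α'_v := α_v + 1 and α'_u := α_u for all other u ∈ V(H'). -/
open Finset SimpleGraph
open scoped Classical

/-- Leaf-removal identity: if `w ≠ o` is a leaf of the connected rooted graph `H`
with unique neighbour `v`, `H' = H ∖ {w}`, `α_w = 0`, and `α'` increments the weight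
at `v` by one, then `hom_{Δ,α}(H,G) = hom_{Δ,α'}(H',G)`.  Here `H'` lives on the
vertex type `{u // u ≠ w}` with the induced adjacency. -/
theorem leaf_removal_weighted_hom
    {VH VG : Type*} [Fintype VH] [Fintype VG]
    (H : SimpleGraph VH) (G : SimpleGraph VG) (o : VH)
    (h : ℕ) (hh : 2 ≤ h) (hcard : Fintype.card VH = h)
    (hconn : H.Connected)
    (w : VH) (hwo : w ≠ o) (v : VH) (hv : H.Adj w v)
    (hleaf : ∀ u, H.Adj w u → u = v)   -- `w` is a leaf with unique neighbour `v`
    (Δ : ℕ) (α : VH → ℝ) (hα : ∀ u, 0 ≤ α u) (hαw : α w = 0)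
    (α' : VH → ℝ) (hα'v : α' v = α v + 1) (hα' : ∀ u, u ≠ v → α' u = α u) :
    ∑ f ∈ Finset.univ.filter
        (fun f : VH → VG =>
          (∀ a b, H.Adj a b → G.Adj (f a) (f b)) ∧ Δ ≤ G.degree (f o)),
      ∏ u : VH, (G.degree (f u) : ℝ) ^ (α u)
    = ∑ f ∈ Finset.univ.filter
        (fun f : {u : VH // u ≠ w} → VG =>
          (∀ a b : {u : VH // u ≠ w}, H.Adj a b → G.Adj (f a) (f b)) ∧
          Δ ≤ G.degree (f ⟨o, fun ho => hwo ho.symm⟩)),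
      ∏ u : {u : VH // u ≠ w}, (G.degree (f u) : ℝ) ^ (α' u.1) := by
  classical
  have hvw : v ≠ w := hv.ne'
  have how : o ≠ w := fun ho => hwo ho.symm
  set s := Finset.univ.filter
        (fun f : VH → VG =>
          (∀ a b, H.Adj a b → G.Adj (f a) (f b)) ∧ Δ ≤ G.degree (f o)) with hs
  set t := Finset.univ.filter
        (fun f : {u : VH // u ≠ w} → VG =>
          (∀ a b : {u : VH // u ≠ w}, H.Adj a b → G.Adj (f a) (f b)) ∧
          Δ ≤ G.degree (f ⟨o, fun ho => hwo ho.symm⟩)) with ht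
  have hmaps : ∀ f ∈ s, (fun u : {u : VH // u ≠ w} => f u.1) ∈ t := by
    intro f hf
    rw [hs, Finset.mem_filter] at hf
    rw [ht, Finset.mem_filter]
    exact ⟨Finset.mem_univ _, fun a b hab => hf.2.1 a.1 b.1 hab, hf.2.2⟩
  rw [← Finset.sum_fiberwise_of_maps_to hmaps
    (fun f => ∏ u : VH, (G.degree (f u) : ℝ) ^ (α u))]
  apply Finset.sum_congr rfl
  intro g hg
  rw [ht, Finset.mem_filter] at hg
  obtain ⟨-, ghom, gdeg⟩ := hg
  set v' : {u : VH // u ≠ w} := ⟨v, hvw⟩ with hv'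
  -- product splitting lemma
  have prodsplit : ∀ F : VH → ℝ,
      ∏ u : VH, F u = F w * ∏ u : {u : VH // u ≠ w}, F u.1 := by
    intro F
    rw [Fintype.prod_eq_mul_prod_compl w F]
    congr 1
    exact Finset.prod_subtype ({w}ᶜ : Finset VH) (fun x => by simp) F
  -- each fiber element contributes the same weight
  have hconst : ∀ f ∈ s.filter (fun f => (fun u : {u : VH // u ≠ w} => f u.1) = g),
      ∏ u : VH, (G.degree (f u) : ℝ) ^ (α u)
        = ∏ u : {u : VH // u ≠ w}, (G.degree (g u) : ℝ) ^ (α u.1) := by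
    intro f hf
    rw [Finset.mem_filter] at hf
    obtain ⟨-, hres⟩ := hf
    rw [prodsplit (fun u => (G.degree (f u) : ℝ) ^ (α u))]
    simp only [hαw, Real.rpow_zero, one_mul]
    refine Finset.prod_congr rfl fun u _ => ?_
    rw [← congrFun hres u]
  rw [Finset.sum_congr rfl hconst, Finset.sum_const, nsmul_eq_mul]
  -- the fiber has cardinality `deg (g v')`
  have hcard : (s.filter (fun f => (fun u : {u : VH // u ≠ w} => f u.1) = g)).card
      = G.degree (g v') := by
    rw [← SimpleGraph.card_neighborFinset_eq_degree]
    refine Finset.card_bij' (fun f _ => f w)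
      (fun y _ => fun u => if h : u = w then y else g ⟨u, h⟩) ?_ ?_ ?_ ?_
    · intro f hf
      rw [Finset.mem_filter, hs, Finset.mem_filter] at hf
      obtain ⟨⟨-, fhom, -⟩, hres⟩ := hf
      rw [SimpleGraph.mem_neighborFinset]
      have h2 : f v = g v' := congrFun hres v'
      rw [← h2]
      exact fhom v w hv.symm
    · intro y hy
      rw [SimpleGraph.mem_neighborFinset] at hy
      rw [Finset.mem_filter, hs, Finset.mem_filter]
      refine ⟨⟨Finset.mem_univ _, ?_, ?_⟩, ?_⟩
      · intro a b hab
        beta_reduce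
        by_cases ha : a = w
        · have hb : b = v := hleaf b (ha ▸ hab)
          have hbw : ¬ b = w := fun hb2 => hvw (hb ▸ hb2)
          rw [dif_pos ha, dif_neg hbw]
          have hbv : (⟨b, hbw⟩ : {u : VH // u ≠ w}) = v' := Subtype.ext hb
          rw [hbv]
          exact hy.symm
        · by_cases hb : b = w
          · have ha' : a = v := hleaf a (hb ▸ hab.symm)
            rw [dif_neg ha, dif_pos hb]
            have hav : (⟨a, ha⟩ : {u : VH // u ≠ w}) = v' := Subtype.ext ha'
            rw [hav]
            exact hy
          · rw [dif_neg ha, dif_neg hb]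
            exact ghom ⟨a, ha⟩ ⟨b, hb⟩ hab
      · beta_reduce
        rw [dif_neg how]
        exact gdeg
      · funext u
        beta_reduce
        rw [dif_neg u.2]
    · intro f hf
      rw [Finset.mem_filter] at hf
      obtain ⟨-, hres⟩ := hf
      funext u
      by_cases hu : u = w
      · subst hu; simp
      · simp only [dif_neg hu]
        exact (congrFun hres ⟨u, hu⟩).symm
    · intro y hy
      simp
  rw [hcard]
  -- final arithmetic: split off the vertex `v'` in both products
  have split2 : ∀ β : VH → ℝ,
      ∏ u : {u : VH // u ≠ w}, (G.degree (g u) : ℝ) ^ (β u.1)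
        = (G.degree (g v') : ℝ) ^ (β v) *
          ∏ u ∈ ({v'}ᶜ : Finset {u : VH // u ≠ w}),
            (G.degree (g u) : ℝ) ^ (β u.1) := by
    intro β
    exact Fintype.prod_eq_mul_prod_compl v' _
  rw [split2 α, split2 α']
  have hrest : ∀ u ∈ ({v'}ᶜ : Finset {u : VH // u ≠ w}),
      (G.degree (g u) : ℝ) ^ (α' u.1) = (G.degree (g u) : ℝ) ^ (α u.1) := by
    intro u hu
    rw [Finset.mem_compl, Finset.mem_singleton] at hu
    have : u.1 ≠ v := fun huv => hu (Subtype.ext huv)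
    rw [hα' u.1 this]
  rw [Finset.prod_congr rfl hrest, hα'v]
  by_cases hdeg : G.degree (g v') = 0
  · rw [hdeg]
    have h1 : α v + 1 ≠ 0 := ne_of_gt (by linarith [hα v])
    simp [Real.zero_rpow h1]
  · have hpos : (0 : ℝ) < (G.degree (g v') : ℝ) := by
      exact_mod_cast Nat.pos_of_ne_zero hdeg
    rw [Real.rpow_add hpos, Real.rpow_one]
    ring
end
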